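/- arXiv:math/0011081 — 9 statements merged into one kernel-verified Lean document; each statement's English description precedes it below -/
import Mathlib

section
/- Let n ≥ 1 and let R be the n×n matrix with entries R(i,j) = C(i-1, n-j) (rows and columns indexed 1..n), the right-justified Pascal triangle. Let a = (1+√5)/2. Then for each p with 1 ≤ p ≤ n, the vector u_p with entries u(i,p) = Σ_{k=1}^{p} (-1)^{i-k} C(i-1,k-1) C(n-i,p-k) a^{2k-i-1} satisfies R u_p = (-1)^{n+p} a^{2p-n-1} u_p. -/
open Polynomial Finset

lemma cl (x y : ℝ) (hy : y ≠ 0) (e m : ℕ) :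
    ((C x + C y * X : ℝ[X]) ^ e).coeff m = (e.choose m : ℝ) * x ^ (e - m) * y ^ m := by
  have h1 : (C x + C y * X : ℝ[X]) = C y * (X + C (x / y)) := by
    rw [mul_add, ← C_mul, mul_div_cancel₀ _ hy]; ring
  rw [h1, mul_pow, ← C_pow, coeff_C_mul, coeff_X_add_C_pow]
  rcases le_or_gt m e with h | h
  · obtain ⟨d, rfl⟩ := Nat.exists_eq_add_of_le h
    rw [Nat.add_sub_cancel_left]
    field_simp
    have hyd : y ^ d * y⁻¹ ^ d = 1 := by rw [← mul_pow, mul_inv_cancel₀ hy, one_pow]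
    linear_combination (y ^ m * x ^ d * ((m + d).choose m : ℝ)) * hyd
  · rw [Nat.choose_eq_zero_of_lt h]
    ring

lemma L1 (n i : ℕ) (hi : i < n) (A B A2 : ℝ[X]) (hAB : B + A = A2) :
    ∑ m ∈ range n, C ((i.choose m : ℝ)) * (A ^ (n - 1 - m) * B ^ m)
      = A ^ (n - 1 - i) * A2 ^ i := by
  rw [← Finset.sum_subset (Finset.range_subset_range.2 hi)]
  · rw [← hAB, add_pow]
    rw [Finset.mul_sum]
    refine Finset.sum_congr rfl fun m hm => ?_
    have hmi : m ≤ i := Nat.lt_succ_iff.1 (Finset.mem_range.1 hm)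
    have h2 : n - 1 - m = (n - 1 - i) + (i - m) := by omega
    rw [h2, pow_add, C_eq_natCast]
    ring
  · intro m _ hm
    rw [Nat.choose_eq_zero_of_lt (by simpa using hm)]
    simp

/-- The right-justified Pascal matrix `R(i,j) = C(i-1, n-j)` (1-based indices) has
eigenvector `u_p` with eigenvalue `(-1)^{n+p} a^{2p-n-1}`, `a` the golden ratio. -/
theorem stmt5 (n : ℕ) (hn : 1 ≤ n) (p : ℕ) (hp1 : 1 ≤ p) (hpn : p ≤ n)
    (a : ℝ) (ha : a = (1 + Real.sqrt 5) / 2)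
    (R : Matrix (Fin n) (Fin n) ℝ)
    (hR : ∀ i j : Fin n, R i j = (Nat.choose i.1 (n - (j.1 + 1)) : ℝ))
    (u : Fin n → ℝ)
    (hu : ∀ i : Fin n, u i = ∑ k ∈ Finset.Icc 1 p,
      (-1 : ℝ) ^ ((i.1 : ℤ) + 1 - k) * (Nat.choose i.1 (k - 1) : ℝ) *
        (Nat.choose (n - (i.1 + 1)) (p - k) : ℝ) * a ^ (2 * (k : ℤ) - ((i.1 : ℤ) + 1) - 1)) :
    R.mulVec u = ((-1 : ℝ) ^ (n + p) * a ^ (2 * (p : ℤ) - (n : ℤ) - 1)) • u := by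
  have h5 : Real.sqrt 5 ^ 2 = 5 := Real.sq_sqrt (by norm_num)
  have hapos : (0 : ℝ) < a := by
    rw [ha]
    have := Real.sqrt_nonneg 5
    linarith
  have ha0 : a ≠ 0 := ne_of_gt hapos
  have ha2 : a ^ 2 = a + 1 := by rw [ha]; field_simp; nlinarith [h5]
  set b : ℝ := -a⁻¹ with hbdef
  have hb2 : b ^ 2 = b + 1 := by
    rw [hbdef]; field_simp; nlinarith [ha2]
  set A : ℝ[X] := C b + C a * X with hA
  set B : ℝ[X] := 1 + X with hB
  set A2 : ℝ[X] := C (b ^ 2) + C (a ^ 2) * X with hA2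
  have hAB : B + A = A2 := by
    rw [hA, hB, hA2, hb2, ha2]
    simp [C_add]
    ring
  -- u as a coefficient
  have U : ∀ i : Fin n, u i = (A ^ i.1 * B ^ (n - (i.1 + 1))).coeff (p - 1) := by
    intro i
    rw [hu i, hA, hB, coeff_mul, Finset.Nat.sum_antidiagonal_eq_sum_range_succ_mk,
      show (p - 1).succ = p by omega,
      show Finset.Icc 1 p = Finset.Ico 1 (p + 1) by rw [Finset.Ico_add_one_right_eq_Icc],
      Finset.sum_Ico_eq_sum_range, show p + 1 - 1 = p by omega]
    refine Finset.sum_congr rfl fun m hm => ?_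
    have hmp : m < p := Finset.mem_range.1 hm
    rw [show (1 + X : ℝ[X]) = C 1 + C 1 * X by simp, cl b a ha0, cl 1 1 one_ne_zero,
      show (1 + m) - 1 = m by omega, show p - (1 + m) = p - 1 - m by omega]
    rcases le_or_gt m i.1 with h | h
    · obtain ⟨d, hd⟩ := Nat.exists_eq_add_of_le h
      rw [hd, show ((m + d : ℕ) : ℤ) + 1 - ((1 + m : ℕ) : ℤ) = (d : ℤ) by push_cast; ring,
        show 2 * ((1 + m : ℕ) : ℤ) - (((m + d : ℕ) : ℤ) + 1) - 1 = (m : ℤ) - (d : ℤ) by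
          push_cast; ring,
        show m + d - m = d by omega]
      rw [zpow_sub₀ ha0]
      simp only [zpow_natCast, hbdef, show (-a⁻¹ : ℝ) = (-1) * a⁻¹ from by ring,
        mul_pow, inv_pow, one_pow, mul_one]
      field_simp
    · rw [Nat.choose_eq_zero_of_lt h]
      simp
  funext i
  have hin : i.1 < n := i.2
  rw [Pi.smul_apply, smul_eq_mul]
  have step1 : R.mulVec u i = ∑ j : Fin n, (Nat.choose i.1 (n - (j.1 + 1)) : ℝ) * u j := by
    simp [Matrix.mulVec, dotProduct, hR]
  have step2 : ∀ j : Fin n, (Nat.choose i.1 (n - (j.1 + 1)) : ℝ) * u j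
      = (fun t => (i.1.choose t : ℝ) * ((A ^ (n - 1 - t) * B ^ t).coeff (p - 1))) (n - 1 - j.1) := by
    intro j
    simp only
    rw [U j, show n - (j.1 + 1) = n - 1 - j.1 by omega, show n - 1 - (n - 1 - j.1) = j.1 by omega]
  rw [step1]
  rw [Finset.sum_congr rfl (fun j _ => step2 j)]
  rw [Fin.sum_univ_eq_sum_range (fun m => (fun t => (i.1.choose t : ℝ) *
      ((A ^ (n - 1 - t) * B ^ t).coeff (p - 1))) (n - 1 - m)) n]
  rw [Finset.sum_range_reflect (fun t => (i.1.choose t : ℝ) *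
      ((A ^ (n - 1 - t) * B ^ t).coeff (p - 1))) n]

  have step3 : ∑ m ∈ range n, (i.1.choose m : ℝ) * ((A ^ (n - 1 - m) * B ^ m).coeff (p - 1))
      = (∑ m ∈ range n, C ((i.1.choose m : ℝ)) * (A ^ (n - 1 - m) * B ^ m)).coeff (p - 1) := by
    rw [finset_sum_coeff]
    exact Finset.sum_congr rfl fun m _ => (coeff_C_mul _).symm
  rw [step3, L1 n i.1 hin A B A2 hAB]
  -- final coefficient identity
  have final : (A ^ (n - 1 - i.1) * A2 ^ i.1).coeff (p - 1)
      = ((-1 : ℝ) ^ (n + p) * a ^ (2 * (p : ℤ) - (n : ℤ) - 1)) *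
        (A ^ i.1 * B ^ (n - (i.1 + 1))).coeff (p - 1) := by
    rw [show n - (i.1 + 1) = n - 1 - i.1 by omega]
    rw [mul_comm (A ^ (n - 1 - i.1)) (A2 ^ i.1)]
    rw [coeff_mul, coeff_mul, Finset.Nat.sum_antidiagonal_eq_sum_range_succ_mk,
      Finset.Nat.sum_antidiagonal_eq_sum_range_succ_mk, show (p - 1).succ = p by omega,
      Finset.mul_sum]
    refine Finset.sum_congr rfl fun m hm => ?_
    have hmp : m < p := Finset.mem_range.1 hm
    dsimp only
    rw [hA, hA2, hB, show (1 + X : ℝ[X]) = C 1 + C 1 * X by simp]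
    rw [cl b a ha0, cl b a ha0, cl (b ^ 2) (a ^ 2) (pow_ne_zero 2 ha0), cl 1 1 one_ne_zero]
    rcases le_or_gt m i.1 with h1 | h1
    · rcases le_or_gt (p - 1 - m) (n - 1 - i.1) with h2 | h2
      · obtain ⟨d1, hd1⟩ := Nat.exists_eq_add_of_le h1
        obtain ⟨d2, hd2⟩ := Nat.exists_eq_add_of_le h2
        set e := p - 1 - m with he
        have hpe : p = m + e + 1 := by omega
        have hne : n = m + d1 + e + d2 + 1 := by omega
        rw [hd2, hd1, show m + d1 - m = d1 by omega, show e + d2 - e = d2 by omega]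
        have hsg : ((-1 : ℝ)) ^ (n + p) = (-1) ^ (d1 + d2) := by
          rw [show n + p = 2 * (m + e + 1) + (d1 + d2) by omega, pow_add, pow_mul]
          norm_num
        have hz : a ^ (2 * (p : ℤ) - (n : ℤ) - 1) = a ^ m * a ^ e / (a ^ d1 * a ^ d2) := by
          rw [show 2 * (p : ℤ) - (n : ℤ) - 1 = ((m + e : ℕ) : ℤ) - ((d1 + d2 : ℕ) : ℤ) by
            omega]
          rw [zpow_sub₀ ha0, zpow_natCast, zpow_natCast, pow_add, pow_add]
        rw [hsg, hz]
        simp only [hbdef, show (-a⁻¹ : ℝ) = (-1) * a⁻¹ from by ring,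
          mul_pow, inv_pow, one_pow, mul_one]
        field_simp
        ring_nf
        have h1pow : ((-1 : ℝ)) ^ (d1 * 2) = 1 := by
          rw [mul_comm, pow_mul]; norm_num
        rw [h1pow]
        ring
      · rw [Nat.choose_eq_zero_of_lt h2]
        simp
    · rw [Nat.choose_eq_zero_of_lt h1]
      simp
  rw [final, ← U i]
end

section
/- Let n ≥ 1, let a be any real number (or indeterminate), and define the n×n matrix W by w(i,j) = (-1)^j a^{n-j} Σ_r (-1)^{i-r} C(i-1, r-1) C(n-i, j-r) a^{2r-i-1}, where the sum is over 1 ≤ r ≤ min(i,j), so that w(i,j) is a Laurent polynomial in a and a^{i+j} w(i,j) is a polynomial. Then W^2 = (1+a^2)^{n-1} I_n. -/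
open Polynomial Finset

noncomputable def Pq (a : ℝ) (n i : ℕ) : ℝ[X] := (1 - C a * X) ^ i * (C a + X) ^ (n - 1 - i)

lemma coeffA (a : ℝ) (i s : ℕ) : ((1 - C a * X : ℝ[X]) ^ i).coeff s = (-a) ^ s * i.choose s := by
  have h1 : (1 - C a * X : ℝ[X]) = C (-a) * X + 1 := by rw [map_neg]; ring
  have h2 : ∀ k, (C (-a) * X : ℝ[X]) ^ k * 1 ^ (i - k) * (i.choose k : ℝ[X])
      = C ((-a) ^ k * (i.choose k : ℝ)) * X ^ k := by
    intro k
    rw [← C_eq_natCast, mul_pow, ← C_pow, one_pow, map_mul]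
    ring
  rw [h1, add_pow, finset_sum_coeff]
  simp only [h2, coeff_C_mul, coeff_X_pow, mul_ite, mul_one, mul_zero]
  rw [Finset.sum_ite_eq]
  split_ifs with h
  · rfl
  · rw [Nat.choose_eq_zero_of_lt (by simpa using h), Nat.cast_zero, mul_zero]

lemma coeffB (a : ℝ) (m t : ℕ) : ((C a + X : ℝ[X]) ^ m).coeff t = a ^ (m - t) * m.choose t := by
  rw [add_comm, coeff_X_add_C_pow]

lemma natDegPq (a : ℝ) (n i : ℕ) (hi : i ≤ n - 1) : (Pq a n i).natDegree ≤ n - 1 := by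
  have hA : (1 - C a * X : ℝ[X]).natDegree ≤ 1 :=
    (natDegree_sub_le _ _).trans (by simpa using (natDegree_C_mul_le a X).trans natDegree_X_le)
  have hB : (C a + X : ℝ[X]).natDegree ≤ 1 :=
    (natDegree_add_le _ _).trans (by simpa using natDegree_X_le)
  refine natDegree_mul_le.trans ?_
  have h1 := (natDegree_pow_le (p := (1 - C a * X : ℝ[X])) (n := i)).trans
    (Nat.mul_le_mul_left i hA)
  have h2 := (natDegree_pow_le (p := (C a + X : ℝ[X])) (n := n - 1 - i)).trans
    (Nat.mul_le_mul_left (n - 1 - i) hB)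
  omega

lemma keyPq (a : ℝ) (n : ℕ) (i : ℕ) (hi : i ≤ n - 1) (hn : 1 ≤ n) :
    ∑ j ∈ Finset.range n, (Pq a n i).coeff j • Pq a n j
      = C ((1 + a ^ 2) ^ (n - 1)) * X ^ i := by
  set F := RatFunc ℝ
  set φ : ℝ[X] →+* F := algebraMap ℝ[X] F with hφdef
  have hinj : Function.Injective φ := IsFractionRing.injective ℝ[X] F
  apply hinj
  have hBne : (C a + X : ℝ[X]) ≠ 0 := by
    intro h
    have := congrArg (fun p => Polynomial.coeff p 1) h
    simp at this
  have hB : φ (C a + X) ≠ 0 := fun h => hBne (hinj (by simpa using h))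
  set u : F := φ (1 - C a * X) / φ (C a + X) with hu
  set α : F := algebraMap ℝ F a with hα
  have hCmap : ∀ c : ℝ, φ (C c) = algebraMap ℝ F c := fun c => by
    rw [hφdef, ← Polynomial.algebraMap_eq, ← IsScalarTower.algebraMap_apply]
  have hBu : φ (C a + X) * u = φ (1 - C a * X) := by
    rw [hu, mul_div_cancel₀ _ hB]
  have hC12 : C (1 + a ^ 2) = (1 + C a ^ 2 : ℝ[X]) := by rw [map_add, map_pow, map_one]
  have e3 : φ (C a + X) * (1 - α * u) = algebraMap ℝ F (1 + a ^ 2) * φ X := by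
    have h : φ (C a + X) * (1 - α * u) = φ (C a + X) - α * (φ (C a + X) * u) := by ring
    rw [h, hBu, hα, ← hCmap, ← hCmap, ← map_mul, ← map_sub, ← map_mul]
    congr 1
    rw [hC12]; ring
  have e4 : φ (C a + X) * (α + u) = algebraMap ℝ F (1 + a ^ 2) := by
    have h : φ (C a + X) * (α + u) = α * φ (C a + X) + φ (C a + X) * u := by ring
    rw [h, hBu, hα, ← hCmap, ← hCmap, ← map_mul, ← map_add]
    congr 1
    rw [hC12]; ring
  have e2 : (aeval u) (Pq a n i) = (1 - α * u) ^ i * (α + u) ^ (n - 1 - i) := by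
    simp only [Pq, map_mul, map_pow, map_sub, map_add, map_one, aeval_C, aeval_X, hα]
  have e1 : φ (∑ j ∈ Finset.range n, (Pq a n i).coeff j • Pq a n j)
      = φ (C a + X) ^ (n - 1) * (aeval u) (Pq a n i) := by
    have hdeg : (Pq a n i).natDegree < n := lt_of_le_of_lt (natDegPq a n i hi) (by omega)
    rw [aeval_eq_sum_range' hdeg u]
    rw [map_sum, Finset.mul_sum]
    refine Finset.sum_congr rfl fun j hj => ?_
    have hj' : j ≤ n - 1 := by
      have := Finset.mem_range.mp hj; omega
    rw [smul_eq_C_mul, map_mul, hCmap, Algebra.smul_def, mul_left_comm]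
    congr 1
    rw [Pq, map_mul, map_pow, map_pow, hu, div_pow, pow_sub₀ _ hB hj']
    ring
  rw [e1, e2]
  have hsplit : i + (n - 1 - i) = n - 1 := by omega
  calc φ (C a + X) ^ (n - 1) * ((1 - α * u) ^ i * (α + u) ^ (n - 1 - i))
      = (φ (C a + X) * (1 - α * u)) ^ i * (φ (C a + X) * (α + u)) ^ (n - 1 - i) := by
        have h : φ (C a + X) ^ (n - 1) = φ (C a + X) ^ i * φ (C a + X) ^ (n - 1 - i) := by
          rw [← pow_add, hsplit]
        rw [h, mul_pow, mul_pow]; ring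
    _ = (algebraMap ℝ F (1 + a ^ 2) * φ X) ^ i * algebraMap ℝ F (1 + a ^ 2) ^ (n - 1 - i) := by
        rw [e3, e4]
    _ = φ (C ((1 + a ^ 2) ^ (n - 1)) * X ^ i) := by
        rw [mul_pow, mul_right_comm, ← pow_add, hsplit, map_mul φ, hCmap, map_pow φ,
          map_pow (algebraMap ℝ F)]

lemma entryEq (a : ℝ) (ha : a ≠ 0) (n i j : ℕ) (hi : i < n) (hj : j < n) :
    (-1 : ℝ) ^ (j + 1) * a ^ ((n : ℤ) - ((j : ℤ) + 1)) *
        ∑ r ∈ Finset.Icc 1 (min (i + 1) (j + 1)),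
          (-1 : ℝ) ^ ((i : ℤ) + 1 - (r : ℤ)) * (Nat.choose i (r - 1) : ℝ) *
            (Nat.choose (n - (i + 1)) ((j + 1) - r) : ℝ) *
            a ^ (2 * (r : ℤ) - ((i : ℤ) + 1) - 1)
    = (-1 : ℝ) ^ (i + j + 1) * (Pq a n i).coeff j := by
  set m := n - 1 - i with hm
  rw [Pq, coeff_mul, Finset.Nat.sum_antidiagonal_eq_sum_range_succ_mk]
  simp only [coeffA, coeffB]
  rw [Finset.sum_subset (Finset.Icc_subset_Icc_right (min_le_right (i+1) (j+1)))
    (by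
      intro r hr hr'
      simp only [Finset.mem_Icc, not_and, not_le] at hr hr'
      have : i < r - 1 := by omega
      rw [Nat.choose_eq_zero_of_lt this]
      simp)]
  rw [← Finset.Ico_add_one_right_eq_Icc, Finset.sum_Ico_eq_sum_range]
  have hrange : j + 1 + 1 - 1 = j + 1 := by omega
  rw [hrange, Finset.mul_sum, Finset.mul_sum]
  refine Finset.sum_congr rfl fun s hs => ?_
  have hs' : s ≤ j := by
    have := Finset.mem_range.mp hs; omega
  have e1 : 1 + s - 1 = s := by omega
  have e2 : j + 1 - (1 + s) = j - s := by omega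
  have e3 : n - (i + 1) = m := by omega
  rw [e1, e2, e3]
  by_cases hsi : s ≤ i
  · by_cases hjs : j - s ≤ m
    · have hz1 : (i : ℤ) + 1 - ((1 + s : ℕ) : ℤ) = ((i - s : ℕ) : ℤ) := by
        rw [Nat.cast_sub hsi]; push_cast; ring
      rw [hz1, zpow_natCast]
      have hz2 : a ^ ((n : ℤ) - ((j : ℤ) + 1)) * a ^ (2 * ((1 + s : ℕ) : ℤ) - ((i : ℤ) + 1) - 1)
          = a ^ s * a ^ (m - (j - s)) := by
        rw [← zpow_add₀ ha, ← pow_add]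
        have h6 : (n : ℤ) - ((j : ℤ) + 1) + (2 * ((1 + s : ℕ) : ℤ) - ((i : ℤ) + 1) - 1)
            = ((s + (m - (j - s)) : ℕ) : ℤ) := by omega
        rw [h6, zpow_natCast]
      have hz3 : (-1 : ℝ) ^ (j + 1) * (-1 : ℝ) ^ (i - s) = (-1) ^ (i + j + 1) * (-1) ^ s := by
        have l : (-1 : ℝ) ^ (j + 1) * (-1 : ℝ) ^ (i - s) = (-1) ^ ((j + 1) + (i - s)) :=
          (pow_add _ _ _).symm
        have r : (-1 : ℝ) ^ (i + j + 1) * (-1 : ℝ) ^ s = (-1) ^ ((i + j + 1) + s) :=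
          (pow_add _ _ _).symm
        rw [l, r, show (i + j + 1) + s = ((j + 1) + (i - s)) + 2 * s by omega]
        conv_rhs => rw [pow_add, pow_mul, neg_one_sq, one_pow]
        rw [mul_one]
      rw [neg_pow]
      linear_combination ((i.choose s : ℝ) * (m.choose (j - s) : ℝ)) *
        (a ^ ((n : ℤ) - ((j : ℤ) + 1)) * a ^ (2 * ((1 + s : ℕ) : ℤ) - ((i : ℤ) + 1) - 1) * hz3
          + ((-1 : ℝ) ^ (i + j + 1) * (-1 : ℝ) ^ s) * hz2)
    · rw [Nat.choose_eq_zero_of_lt (by omega : m < j - s)]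
      simp
  · rw [Nat.choose_eq_zero_of_lt (by omega : i < s)]
    simp

/-- For any nonzero real `a` (no relation such as `a² = a + 1` required), the matrix
`W` with `w(i,j) = (-1)^j a^{n-j} ∑_r (-1)^{i-r} C(i-1,r-1) C(n-i,j-r) a^{2r-i-1}`
satisfies `W² = (1+a²)^{n-1} Iₙ`. -/
theorem stmt7 (n : ℕ) (hn : 1 ≤ n) (a : ℝ) (ha : a ≠ 0)
    (W : Matrix (Fin n) (Fin n) ℝ)
    (hW : ∀ i j : Fin n, W i j =
      (-1 : ℝ) ^ (j.1 + 1) * a ^ ((n : ℤ) - ((j.1 : ℤ) + 1)) *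
        ∑ r ∈ Finset.Icc 1 (min (i.1 + 1) (j.1 + 1)),
          (-1 : ℝ) ^ ((i.1 : ℤ) + 1 - r) * (Nat.choose i.1 (r - 1) : ℝ) *
            (Nat.choose (n - (i.1 + 1)) ((j.1 + 1) - r) : ℝ) *
            a ^ (2 * (r : ℤ) - ((i.1 : ℤ) + 1) - 1)) :
    W * W = ((1 + a ^ 2) ^ (n - 1)) • (1 : Matrix (Fin n) (Fin n) ℝ) := by
  have hWe : ∀ p q : Fin n, W p q = (-1 : ℝ) ^ (p.1 + q.1 + 1) * (Pq a n p.1).coeff q.1 := by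
    intro p q
    rw [hW p q]
    exact entryEq a ha n p.1 q.1 p.isLt q.isLt
  ext i k
  rw [Matrix.mul_apply]
  have hterm : ∀ j : Fin n, W i j * W j k
      = (-1 : ℝ) ^ (i.1 + k.1) * ((Pq a n i.1).coeff j.1 * (Pq a n j.1).coeff k.1) := by
    intro j
    rw [hWe i j, hWe j k]
    have hsign : (-1 : ℝ) ^ (i.1 + j.1 + 1) * (-1 : ℝ) ^ (j.1 + k.1 + 1)
        = (-1 : ℝ) ^ (i.1 + k.1) := by
      rw [← pow_add,
        show (i.1 + j.1 + 1) + (j.1 + k.1 + 1) = (i.1 + k.1) + 2 * (j.1 + 1) by omega]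
      conv_lhs => rw [pow_add, pow_mul, neg_one_sq, one_pow]
      rw [mul_one]
    linear_combination ((Pq a n i.1).coeff j.1 * (Pq a n j.1).coeff k.1) * hsign
  rw [Finset.sum_congr rfl (fun j _ => hterm j), ← Finset.mul_sum]
  have hsum : ∑ j : Fin n, (Pq a n i.1).coeff j.1 * (Pq a n j.1).coeff k.1
      = ((1 + a ^ 2) ^ (n - 1)) * (if k.1 = i.1 then 1 else 0) := by
    have h1 : ∑ j : Fin n, (Pq a n i.1).coeff j.1 * (Pq a n j.1).coeff k.1
        = (∑ j ∈ Finset.range n, (Pq a n i.1).coeff j • Pq a n j).coeff k.1 := by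
      rw [finset_sum_coeff,
        ← Fin.sum_univ_eq_sum_range (fun j => ((Pq a n i.1).coeff j • Pq a n j).coeff k.1) n]
      exact Finset.sum_congr rfl fun j _ => by rw [coeff_smul, smul_eq_mul]
    have hi1 : i.1 ≤ n - 1 := by have := i.isLt; omega
    rw [h1, keyPq a n i.1 hi1 hn, coeff_C_mul, coeff_X_pow]
  rw [hsum]
  simp only [Matrix.smul_apply, Matrix.one_apply, smul_eq_mul]
  by_cases h : i = k
  · subst h
    rw [if_pos rfl, if_pos rfl, show i.1 + i.1 = 2 * i.1 by omega, pow_mul, neg_one_sq, one_pow,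
      one_mul]
  · have h' : k.1 ≠ i.1 := fun hh => h (Fin.ext hh.symm)
    rw [if_neg h', if_neg h]
    ring
end

section
/- Let n ≥ 1, a = (1+√5)/2, and define the n×n matrix V by v(i,j) = (-1)^j a^{n-j} (1+a^2)^{-(n-1)/2} Σ_{k=1}^{j} (-1)^{i-k} C(i-1,k-1) C(n-i,j-k) a^{2k-i-1}. Then V^2 = I_n (V is an involution). -/
open Polynomial Finset


lemma c1 (a : ℝ) (p k : ℕ) : ((1 + C a * X)^p).coeff k = p.choose k * a ^ k := by
  rw [add_comm, add_pow, finset_sum_coeff]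
  simp only [mul_pow, ← C_pow, one_pow, mul_one, ← C_eq_natCast, mul_assoc,
    coeff_C_mul, coeff_mul_C, coeff_X_pow]
  rw [Finset.sum_eq_single k]
  · simp [mul_comm]
  · intro b _ h
    simp [coeff_X_pow, Ne.symm h]
  · intro h
    simp only [Finset.mem_range, not_lt] at h
    simp [Nat.choose_eq_zero_of_lt h]

lemma c2 (a : ℝ) (q r : ℕ) : ((C a - X)^q).coeff r = (-1)^r * q.choose r * a ^ (q - r) := by
  have h : (C a - X : ℝ[X]) = -(X + C (-a)) := by simp [map_neg]; ring
  rw [h, neg_pow]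
  have h2 : ((-1 : ℝ[X])) ^ q = C ((-1)^q) := by simp
  rw [h2, coeff_C_mul, coeff_X_add_C_pow]
  rcases le_or_gt r q with hr | hr
  · have h3 : q + (q - r) = r + 2 * (q - r) := by omega
    have : ((-1:ℝ))^q * (-1)^(q-r) = (-1)^r := by
      rw [← pow_add, h3, pow_add, pow_mul]; norm_num
    rw [neg_pow a, ← mul_assoc, ← mul_assoc, this]; ring
  · simp [Nat.choose_eq_zero_of_lt hr]



lemma cprod (a : ℝ) (p q j : ℕ) :
    (((1 + C a * X)^p * (C a - X)^q)).coeff j =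
      ∑ k ∈ Finset.range (j+1), (p.choose k : ℝ) * a ^ k *
        ((-1)^(j-k) * (q.choose (j-k)) * a ^ (q - (j-k))) := by
  rw [coeff_mul, Finset.Nat.sum_antidiagonal_eq_sum_range_succ_mk]
  refine Finset.sum_congr rfl fun k _ => ?_
  rw [c1, c2]

lemma negpow_eq (m k : ℕ) (h : m % 2 = k % 2) : ((-1:ℝ))^m = (-1)^k := by
  rcases Nat.even_or_odd m with hm|hm
  · have hk : Even k := Nat.even_iff.2 (by rw [Nat.even_iff] at hm; omega)
    rw [hm.neg_one_pow, hk.neg_one_pow]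
  · have hk : Odd k := Nat.odd_iff.2 (by rw [Nat.odd_iff] at hm; omega)
    rw [hm.neg_one_pow, hk.neg_one_pow]

lemma neg_one_zpow_sub (i p : ℕ) : ((-1:ℝ)) ^ ((i:ℤ) - p) = (-1)^(i+p) := by
  rw [zpow_sub₀ (by norm_num : (-1:ℝ) ≠ 0), zpow_natCast, zpow_natCast, pow_add]
  rw [div_eq_iff (by positivity : ((-1:ℝ))^p ≠ 0), mul_assoc, ← pow_add]
  have : ((-1:ℝ))^(p+p) = 1 := Even.neg_one_pow ⟨p, rfl⟩
  rw [this, mul_one]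


lemma homog (a : ℝ) (m i : ℕ) (hi : i ≤ m) :
    ∑ j ∈ Finset.range (m+1), C (((1 + C a * X)^i * (C a - X)^(m-i)).coeff j) *
      (-(1 + C a * X))^j * (C a - X)^(m-j)
    = C ((-1)^i * (1+a^2)^m) * X^i := by
  set Q : ℝ[X] := (1 + C a * X)^i * (C a - X)^(m-i) with hQ
  have hd1 : (1 + C a * X : ℝ[X]).natDegree ≤ 1 := by
    refine (natDegree_add_le _ _).trans ?_
    simp [natDegree_C_mul_le]
    exact (natDegree_C_mul_le a X).trans (by simp)
  have hd2 : (C a - X : ℝ[X]).natDegree ≤ 1 := by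
    refine (natDegree_sub_le _ _).trans ?_
    simp
  have hdeg : Q.natDegree < m + 1 := by
    have := (natDegree_mul_le (p := (1 + C a * X : ℝ[X])^i) (q := (C a - X)^(m-i)))
    have h1 : ((1 + C a * X : ℝ[X])^i).natDegree ≤ i := by
      refine (natDegree_pow_le).trans ?_
      calc i * (1 + C a * X : ℝ[X]).natDegree ≤ i * 1 := Nat.mul_le_mul_left _ hd1
        _ = i := Nat.mul_one i
    have h2 : ((C a - X : ℝ[X])^(m-i)).natDegree ≤ m - i := by
      refine (natDegree_pow_le).trans ?_
      calc (m-i) * (C a - X : ℝ[X]).natDegree ≤ (m-i) * 1 := Nat.mul_le_mul_left _ hd2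
        _ = m - i := Nat.mul_one _
    have h3 : Q.natDegree ≤ i + (m - i) := hQ ▸ (natDegree_mul_le.trans (add_le_add h1 h2))
    omega
  apply IsFractionRing.injective ℝ[X] (RatFunc ℝ)
  set A := algebraMap ℝ[X] (RatFunc ℝ) with hA
  set x : RatFunc ℝ := A X with hx
  set c : RatFunc ℝ := algebraMap ℝ (RatFunc ℝ) a with hc
  have hCa : A (C a) = c := by
    rw [hc, IsScalarTower.algebraMap_apply ℝ ℝ[X] (RatFunc ℝ)]
    rfl
  set v : RatFunc ℝ := c - x with hv
  have hvA : A (C a - X) = v := by rw [map_sub, hCa]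
  have hvne : v ≠ 0 := by
    rw [← hvA]
    intro h
    have h0 : (C a - X : ℝ[X]) = 0 := IsFractionRing.injective ℝ[X] (RatFunc ℝ) (by rw [map_zero]; exact h)
    have := congrArg (fun p => Polynomial.coeff p 1) h0
    simp at this
  set u : RatFunc ℝ := -(1 + c * x) with hu
  have huA : A (-(1 + C a * X)) = u := by
    rw [map_neg, map_add, map_one, map_mul, hCa]
  set w : RatFunc ℝ := u / v with hw
  -- push map inside
  rw [map_sum]
  have hterm : ∀ j ∈ Finset.range (m+1),
      A (C (Q.coeff j) * (-(1 + C a * X))^j * (C a - X)^(m-j))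
        = (Q.coeff j • w ^ j) * v ^ m := by
    intro j hj
    rw [Finset.mem_range] at hj
    rw [map_mul, map_mul, map_pow, map_pow, huA, hvA]
    have hsm : (Q.coeff j) • (w ^ j) = A (C (Q.coeff j)) * w ^ j := by
      rw [Algebra.smul_def, IsScalarTower.algebraMap_apply ℝ ℝ[X] (RatFunc ℝ)]
      rfl
    rw [hsm, hw, div_pow, pow_sub₀ v hvne (by omega)]
    field_simp
  rw [Finset.sum_congr rfl hterm, ← Finset.sum_mul, ← Polynomial.aeval_eq_sum_range' hdeg w]
  -- evaluate aeval
  have haev : (aeval w) Q = (1 + c * w)^i * (c - w)^(m-i) := by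
    rw [hQ]
    simp [hc]
  have h1 : 1 + c * w = (-(1 + c^2) * x) / v := by
    rw [hw, hu, hv]
    have hcx : c - x ≠ 0 := hvne
    field_simp
    ring
  have h2 : c - w = (1 + c^2) / v := by
    rw [hw, hu, hv]
    have hcx : c - x ≠ 0 := hvne
    field_simp
    ring
  rw [haev, h1, h2, div_pow, div_pow]
  have hvm : v ^ m = v ^ i * v ^ (m - i) := by rw [← pow_add]; congr 1; omega
  rw [map_mul, map_pow]
  have hCX : A X = x := rfl
  have hAC : ∀ r : ℝ, A (C r) = algebraMap ℝ (RatFunc ℝ) r :=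
    fun r => (IsScalarTower.algebraMap_apply ℝ ℝ[X] (RatFunc ℝ) r).symm
  have hCc : A (C ((-1:ℝ)^i * (1+a^2)^m)) = (-1)^i * (1 + c^2)^m := by
    rw [hAC, map_mul, map_pow, map_neg, map_one, map_pow, map_add, map_one, map_pow, hc]
  rw [hCc, hCX]
  have hcm : ((1:RatFunc ℝ)+c^2)^m = (1+c^2)^i * (1+c^2)^(m-i) := by
    rw [← pow_add]; congr 1; omega
  field_simp [hvm]
  rw [hcm, hvm, neg_pow, mul_pow]
  ring

lemma row (a : ℝ) (ha : 0 < a) (t : ℝ) (n i j : ℕ) (hi : i < n) (hj : j < n) :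
    (-1 : ℝ) ^ (j + 1) * a ^ ((n : ℤ) - ((j : ℤ) + 1)) * t *
        ∑ k ∈ Finset.Icc 1 (j + 1),
          (-1 : ℝ) ^ ((i : ℤ) + 1 - k) * (Nat.choose i (k - 1) : ℝ) *
            (Nat.choose (n - (i + 1)) ((j + 1) - k) : ℝ) *
            a ^ (2 * (k : ℤ) - ((i : ℤ) + 1) - 1)
    = t * (-1) ^ (i + 1) * ((1 + C a * X) ^ i * (C a - X) ^ (n - 1 - i)).coeff j := by
  rw [cprod, ← Finset.Ico_add_one_right_eq_Icc, Finset.sum_Ico_eq_sum_range]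
  have hr : j + 1 + 1 - 1 = j + 1 := by omega
  rw [hr, Finset.mul_sum, Finset.mul_sum]
  refine Finset.sum_congr rfl fun p hp => ?_
  rw [Finset.mem_range] at hp
  have h1 : (1+p) - 1 = p := by omega
  have h2 : (j+1) - (1+p) = j - p := by omega
  have h3 : n - (i+1) = n - 1 - i := by omega
  rw [h1, h2, h3]
  have hz : ((i:ℤ) + 1 - ((1+p : ℕ) : ℤ)) = (i:ℤ) - p := by push_cast; ring
  rw [hz, neg_one_zpow_sub]
  rcases le_or_gt (j - p) (n-1-i) with hle|hlt
  · have hA : a ^ ((n:ℤ) - ((j:ℤ)+1)) * a ^ (2 * ((1+p:ℕ):ℤ) - ((i:ℤ)+1) - 1)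
        = a ^ (p:ℕ) * a ^ ((n-1-i) - (j-p) : ℕ) := by
      rw [← zpow_natCast a p, ← zpow_natCast a ((n-1-i)-(j-p)), ← zpow_add₀ ha.ne',
        ← zpow_add₀ ha.ne']
      congr 1
      omega
    have hS : ((-1:ℝ))^(j+1) * (-1)^(i+p) = (-1)^(i+1) * (-1)^(j-p) := by
      rw [← pow_add, ← pow_add]
      exact negpow_eq _ _ (by omega)
    have key : ∀ c1 c2 : ℝ,
        (-1:ℝ)^(j+1) * a ^ ((n:ℤ)-((j:ℤ)+1)) * t *
            ((-1)^(i+p) * c1 * c2 * a ^ (2*((1+p:ℕ):ℤ)-((i:ℤ)+1)-1))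
          = t * (-1)^(i+1) * (c1 * a^p * ((-1)^(j-p) * c2 * a^((n-1-i)-(j-p)))) := by
      intro c1 c2
      calc (-1:ℝ)^(j+1) * a ^ ((n:ℤ)-((j:ℤ)+1)) * t *
            ((-1)^(i+p) * c1 * c2 * a ^ (2*((1+p:ℕ):ℤ)-((i:ℤ)+1)-1))
          = ((-1:ℝ)^(j+1) * (-1)^(i+p)) *
              (a ^ ((n:ℤ)-((j:ℤ)+1)) * a ^ (2*((1+p:ℕ):ℤ)-((i:ℤ)+1)-1)) * t * c1 * c2 := by
            ring
        _ = ((-1:ℝ)^(i+1) * (-1)^(j-p)) * (a^(p:ℕ) * a^((n-1-i)-(j-p):ℕ)) * t * c1 * c2 := by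
            rw [hA, hS]
        _ = t * (-1)^(i+1) * (c1 * a^p * ((-1)^(j-p) * c2 * a^((n-1-i)-(j-p)))) := by ring
    exact key _ _
  · rw [Nat.choose_eq_zero_of_lt hlt]
    simp


/-- The scaled eigenvector matrix `V`, with
`v(i,j) = (-1)^j a^{n-j} (1+a²)^{-(n-1)/2} ∑_k (-1)^{i-k} C(i-1,k-1) C(n-i,j-k) a^{2k-i-1}`
and `a` the golden ratio, is an involution: `V² = Iₙ`. -/
theorem stmt8 (n : ℕ) (hn : 1 ≤ n) (a : ℝ) (ha : a = (1 + Real.sqrt 5) / 2)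
    (V : Matrix (Fin n) (Fin n) ℝ)
    (hV : ∀ i j : Fin n, V i j =
      (-1 : ℝ) ^ (j.1 + 1) * a ^ ((n : ℤ) - ((j.1 : ℤ) + 1)) *
        (Real.sqrt ((1 + a ^ 2) ^ (n - 1)))⁻¹ *
        ∑ k ∈ Finset.Icc 1 (j.1 + 1),
          (-1 : ℝ) ^ ((i.1 : ℤ) + 1 - k) * (Nat.choose i.1 (k - 1) : ℝ) *
            (Nat.choose (n - (i.1 + 1)) ((j.1 + 1) - k) : ℝ) *
            a ^ (2 * (k : ℤ) - ((i.1 : ℤ) + 1) - 1)) :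
    V * V = 1 := by
  have hapos : 0 < a := by
    rw [ha]
    have : (0:ℝ) ≤ Real.sqrt 5 := Real.sqrt_nonneg 5
    linarith
  have hbase : (0:ℝ) < (1+a^2)^(n-1) := by positivity
  set s : ℝ := Real.sqrt ((1 + a^2)^(n-1)) with hs
  have hss : s * s = (1+a^2)^(n-1) := Real.mul_self_sqrt hbase.le
  have hsne : s ≠ 0 := (Real.sqrt_pos.2 hbase).ne'
  have hrow : ∀ i j : Fin n, V i j = s⁻¹ * (-1)^(i.1+1) *
      ((1 + C a * X)^(i.1) * (C a - X)^(n-1-i.1)).coeff j.1 := by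
    intro i j
    rw [hV i j]
    exact row a hapos s⁻¹ n i.1 j.1 i.2 j.2
  ext i l
  rw [Matrix.mul_apply, Matrix.one_apply]
  set m := n - 1 with hm
  have him : i.1 ≤ m := by omega
  have hcalc : ∀ j : Fin n, V i j * V j l = (s⁻¹ * s⁻¹ * (-1)^(i.1+1)) *
      (((1 + C a * X)^(i.1) * (C a - X)^(m-i.1)).coeff j.1 *
        (-((-1:ℝ)^(j.1) * ((1 + C a * X)^(j.1) * (C a - X)^(m-j.1)).coeff l.1))) := by
    intro j
    rw [hrow i j, hrow j l]
    ring
  rw [Finset.sum_congr rfl (fun j _ => hcalc j), ← Finset.mul_sum]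
  have hn' : m + 1 = n := by omega
  have hfin : ∑ j : Fin n, (((1 + C a * X)^(i.1) * (C a - X)^(m-i.1)).coeff j.1 *
        (-((-1:ℝ)^(j.1) * ((1 + C a * X)^(j.1) * (C a - X)^(m-j.1)).coeff l.1)))
      = - ∑ jj ∈ Finset.range n, (((1 + C a * X)^(i.1) * (C a - X)^(m-i.1)).coeff jj *
        ((-1:ℝ)^(jj) * ((1 + C a * X)^(jj) * (C a - X)^(m-jj)).coeff l.1)) := by
    have e1 := Fin.sum_univ_eq_sum_range (fun jj => (((1 + C a * X)^(i.1) * (C a - X)^(m-i.1)).coeff jj *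
        (-((-1:ℝ)^(jj) * ((1 + C a * X)^(jj) * (C a - X)^(m-jj)).coeff l.1)))) n
    refine e1.trans ?_
    rw [← Finset.sum_neg_distrib]
    exact Finset.sum_congr rfl fun jj _ => by ring
  rw [hfin]
  -- now use homog
  have hhom := homog a m i.1 him
  have hco := congrArg (fun P => Polynomial.coeff P l.1) hhom
  simp only [finset_sum_coeff] at hco
  have hterm : ∀ jj ∈ Finset.range (m+1),
      (C (((1 + C a * X)^(i.1) * (C a - X)^(m-i.1)).coeff jj) *
        (-(1 + C a * X))^jj * (C a - X)^(m-jj)).coeff l.1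
      = ((1 + C a * X)^(i.1) * (C a - X)^(m-i.1)).coeff jj *
        ((-1:ℝ)^(jj) * ((1 + C a * X)^(jj) * (C a - X)^(m-jj)).coeff l.1) := by
    intro jj _
    rw [neg_pow]
    have h1 : ((-1 : ℝ[X]))^jj = C ((-1:ℝ)^jj) := by
      rw [map_pow, map_neg, map_one]
    rw [h1]
    have h2 : C (((1 + C a * X)^(i.1) * (C a - X)^(m-i.1)).coeff jj) *
        (C ((-1:ℝ)^jj) * (1 + C a * X)^jj) * (C a - X)^(m-jj)
        = C (((1 + C a * X)^(i.1) * (C a - X)^(m-i.1)).coeff jj * (-1:ℝ)^jj) *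
          ((1 + C a * X)^jj * (C a - X)^(m-jj)) := by
      rw [C_mul]; ring
    rw [h2, coeff_C_mul]
    ring
  rw [Finset.sum_congr rfl hterm] at hco
  rw [hn'] at hco
  rw [hco, coeff_C_mul, coeff_X_pow]
  rcases eq_or_ne i l with heq | hne
  · subst heq
    rw [if_pos rfl, if_pos rfl]
    have h2 : ((-1:ℝ))^(i.1) * (-1)^(i.1) = 1 := by
      rw [← pow_add]; exact Even.neg_one_pow ⟨i.1, rfl⟩
    have hfield : s⁻¹ * s⁻¹ * (1+a^2)^m = 1 := by
      rw [← hss]; field_simp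
    linear_combination (s⁻¹ * s⁻¹ * (1+a^2)^m) * h2 + hfield
  · rw [if_neg hne, if_neg (fun h : l.1 = i.1 => hne (Fin.ext h.symm))]
    ring
end

section
/- Let n ≥ 1, a = (1+√5)/2, R the n×n matrix with R(i,j) = C(i-1, n-j), and V the matrix with v(i,j) = (-1)^j a^{n-j} (1+a^2)^{-(n-1)/2} Σ_{k=1}^{j} (-1)^{i-k} C(i-1,k-1) C(n-i,j-k) a^{2k-i-1}. Then V^{-1} R V = diag(λ_1, ..., λ_n) with λ_j = (-1)^{n+j} a^{2j-n-1}; equivalently, since V^2 = I, V R V = diag(λ_j). -/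
open Polynomial Finset


/-- coefficient of a power of a linear polynomial -/
lemma coeff_linear_pow (u v : ℝ) (m k : ℕ) :
    ((C u * X + C v) ^ m).coeff k = u ^ k * v ^ (m - k) * (m.choose k) := by
  rw [add_pow]
  rw [finset_sum_coeff]
  have h : ∀ i ∈ range (m+1),
      ((C u * X) ^ i * (C v) ^ (m - i) * ((m.choose i : ℕ) : ℝ[X])).coeff k
        = if i = k then u ^ k * v ^ (m - k) * (m.choose k) else 0 := by
    intro i _
    have e : (C u * X) ^ i * (C v) ^ (m - i) * ((m.choose i : ℕ) : ℝ[X])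
        = C (u ^ i * v ^ (m - i) * (m.choose i)) * X ^ i := by
      rw [mul_pow, ← C_pow, ← C_pow, ← C_eq_natCast]
      rw [C_mul, C_mul]
      ring
    rw [e, coeff_C_mul, coeff_X_pow]
    by_cases h : i = k
    · simp [h]
    · simp [h, Ne.symm h]
  rw [Finset.sum_congr rfl h, Finset.sum_ite_eq' (range (m+1)) k]
  split_ifs with h
  · rfl
  · rw [Finset.mem_range, not_lt] at h
    rw [Nat.choose_eq_zero_of_lt (by omega), Nat.cast_zero, mul_zero]


noncomputable def homP (A B : Polynomial ℝ) (m : ℕ) (p : Polynomial ℝ) : Polynomial ℝ :=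
  ∑ l ∈ range (m+1), C (p.coeff l) * (A^l * B^(m-l))

lemma homP_add (A B : Polynomial ℝ) (m : ℕ) (p q : Polynomial ℝ) :
    homP A B m (p + q) = homP A B m p + homP A B m q := by
  simp [homP, C_add, add_mul, Finset.sum_add_distrib]

lemma homP_C_mul (A B : Polynomial ℝ) (m : ℕ) (c : ℝ) (p : Polynomial ℝ) :
    homP A B m (C c * p) = C c * homP A B m p := by
  simp [homP, Finset.mul_sum, C_mul, mul_assoc]

lemma homP_X_mul (A B : Polynomial ℝ) (m : ℕ) (p : Polynomial ℝ) :
    homP A B (m+1) (X * p) = A * homP A B m p := by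
  rw [homP, Finset.sum_range_succ']
  have h0 : (X * p).coeff 0 = 0 := by
    rw [mul_coeff_zero, coeff_X_zero, zero_mul]
  rw [h0, map_zero, zero_mul, add_zero, homP, Finset.mul_sum]
  refine Finset.sum_congr rfl fun l hl => ?_
  rw [coeff_X_mul]
  have : m + 1 - (l + 1) = m - l := by omega
  rw [this]
  ring

lemma homP_succ (A B : Polynomial ℝ) (m : ℕ) (p : Polynomial ℝ) (hp : p.natDegree ≤ m) :
    homP A B (m+1) p = B * homP A B m p := by
  rw [homP, Finset.sum_range_succ]
  have h0 : p.coeff (m+1) = 0 := coeff_eq_zero_of_natDegree_lt (by omega)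
  rw [h0, map_zero, zero_mul, add_zero, homP, Finset.mul_sum]
  refine Finset.sum_congr rfl fun l hl => ?_
  rw [Finset.mem_range] at hl
  have : m + 1 - l = (m - l) + 1 := by omega
  rw [this, pow_succ]
  ring

lemma homP_linear_mul (A B : Polynomial ℝ) (m : ℕ) (q1 q0 : ℝ) (p : Polynomial ℝ)
    (hp : p.natDegree ≤ m) :
    homP A B (m+1) ((C q1 * X + C q0) * p) = (C q1 * A + C q0 * B) * homP A B m p := by
  have e : (C q1 * X + C q0) * p = C q1 * (X * p) + C q0 * p := by ring
  rw [e, homP_add, homP_C_mul, homP_C_mul, homP_X_mul, homP_succ A B m p hp]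
  ring

lemma natDegree_linear_pow_mul (u0 u1 v0 v1 : ℝ) (i k : ℕ) :
    ((C u1 * X + C u0)^i * (C v1 * X + C v0)^k).natDegree ≤ i + k := by
  refine (natDegree_mul_le).trans ?_
  have h1 : ((C u1 * X + C u0)^i).natDegree ≤ i := by
    refine (natDegree_pow_le).trans ?_
    have := natDegree_linear_le (a := u1) (b := u0)
    nlinarith [this]
  have h2 : ((C v1 * X + C v0)^k).natDegree ≤ k := by
    refine (natDegree_pow_le).trans ?_
    have := natDegree_linear_le (a := v1) (b := v0)
    nlinarith [this]
  omega

lemma homP_prod (A B : Polynomial ℝ) (u0 u1 v0 v1 : ℝ) :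
    ∀ N i : ℕ, i ≤ N →
    homP A B N ((C u1 * X + C u0)^i * (C v1 * X + C v0)^(N-i))
      = (C u1 * A + C u0 * B)^i * (C v1 * A + C v0 * B)^(N-i) := by
  intro N
  induction N with
  | zero =>
    intro i hi
    interval_cases i
    simp [homP]
  | succ N ih =>
    intro i hi
    match i with
    | 0 =>
      have e : ((C u1 * X + C u0):Polynomial ℝ)^0 * (C v1 * X + C v0)^(N+1-0)
          = (C v1 * X + C v0) * ((C u1 * X + C u0)^0 * (C v1 * X + C v0)^(N-0)) := by
        rw [pow_zero, one_mul, one_mul]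
        rw [show N + 1 - 0 = (N - 0) + 1 by omega, pow_succ]
        ring
      rw [e, homP_linear_mul A B N v1 v0 _ (by simpa using natDegree_linear_pow_mul u0 u1 v0 v1 0 (N-0)),
        ih 0 (by omega)]
      rw [show N + 1 - 0 = (N - 0) + 1 by omega, pow_succ]
      ring
    | (s+1) =>
      have hs : s ≤ N := by omega
      have e : ((C u1 * X + C u0):Polynomial ℝ)^(s+1) * (C v1 * X + C v0)^(N+1-(s+1))
          = (C u1 * X + C u0) * ((C u1 * X + C u0)^s * (C v1 * X + C v0)^(N-s)) := by
        rw [show N + 1 - (s+1) = N - s by omega, pow_succ]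
        ring
      rw [e, homP_linear_mul A B N u1 u0 _ ((natDegree_linear_pow_mul u0 u1 v0 v1 s (N-s)).trans (by omega)),
        ih s hs, show N + 1 - (s+1) = N - s by omega, pow_succ]
      ring


/-- binomial sum identity -/
lemma sum_choose_poly (u v : Polynomial ℝ) (N i : ℕ) (hi : i ≤ N) :
    ∑ m ∈ range (N+1), (i.choose m : ℝ) • (u^m * v^(N-m)) = (u+v)^i * v^(N-i) := by
  have hsub : ∑ m ∈ range (i+1), (i.choose m : ℝ) • (u^m * v^(N-m))
      = ∑ m ∈ range (N+1), (i.choose m : ℝ) • (u^m * v^(N-m)) := by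
    refine Finset.sum_subset ?_ ?_
    · intro x hx; rw [Finset.mem_range] at *; omega
    · intro x _ hx
      rw [Finset.mem_range, not_lt] at hx
      rw [Nat.choose_eq_zero_of_lt (by omega), Nat.cast_zero, zero_smul]
  rw [← hsub]
  have e : ∀ m ∈ range (i+1), (i.choose m : ℝ) • (u^m * v^(N-m))
      = ((i.choose m : ℝ) • (u^m * v^(i-m))) * v^(N-i) := by
    intro m hm
    rw [Finset.mem_range] at hm
    rw [smul_mul_assoc, mul_assoc, ← pow_add, show i - m + (N - i) = N - m by omega]
  rw [Finset.sum_congr rfl e, ← Finset.sum_mul]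
  congr 1
  rw [add_pow]
  refine Finset.sum_congr rfl fun m hm => ?_
  rw [smul_eq_C_mul, C_eq_natCast]
  ring

/-- the coefficient scaling identity -/
lemma coeff_scale (a b : ℝ) (N i j : ℕ) (hi : i ≤ N) (hj : j ≤ N) :
    ((C (a*a) * X + C (b*b))^i * (C a * X + C b)^(N-i)).coeff j
      = a^j * b^(N-j) * (((C a * X + C b)^i * (C 1 * X + C 1)^(N-i)).coeff j) := by
  rw [coeff_mul, coeff_mul, Nat.sum_antidiagonal_eq_sum_range_succ_mk,
    Nat.sum_antidiagonal_eq_sum_range_succ_mk, Finset.mul_sum]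
  refine Finset.sum_congr rfl fun s hs => ?_
  rw [Finset.mem_range] at hs
  rw [coeff_linear_pow, coeff_linear_pow, coeff_linear_pow, coeff_linear_pow]
  by_cases h1 : s ≤ i
  · by_cases h2 : j - s ≤ N - i
    · rw [one_pow, one_pow, one_mul]
      have ea : (a*a)^s = a^(2*s) := by rw [two_mul, pow_add]; ring
      have eb : (b*b)^(i-s) = b^(2*(i-s)) := by rw [two_mul, pow_add]; ring
      rw [ea, eb]
      have e1 : a^(2*s) * a^(j-s) = a^(2*s + (j-s)) := by rw [pow_add]
      have e2 : a^j * a^s = a^(j+s) := by rw [pow_add]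
      have e3 : b^(2*(i-s)) * b^(N-i-(j-s)) = b^(2*(i-s) + (N-i-(j-s))) := by rw [pow_add]
      have e4 : b^(N-j) * b^(i-s) = b^(N-j+(i-s)) := by rw [pow_add]
      calc a^(2*s) * b^(2*(i-s)) * ↑(i.choose s) * (a^(j-s) * b^(N-i-(j-s)) * ↑((N-i).choose (j-s)))
          = (a^(2*s) * a^(j-s)) * (b^(2*(i-s)) * b^(N-i-(j-s))) * (↑(i.choose s) * ↑((N-i).choose (j-s))) := by ring
        _ = a^(2*s+(j-s)) * b^(2*(i-s) + (N-i-(j-s))) * (↑(i.choose s) * ↑((N-i).choose (j-s))) := by rw [e1, e3]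
        _ = a^(j+s) * b^(N-j+(i-s)) * (↑(i.choose s) * ↑((N-i).choose (j-s))) := by
            rw [show 2*s+(j-s) = j + s by omega, show 2*(i-s) + (N-i-(j-s)) = N-j+(i-s) by omega]
        _ = a^j*b^(N-j) * (a^s * b^(i-s) * ↑(i.choose s) * (1 * ↑((N-i).choose (j-s)))) := by
            rw [← e2, ← e4]; ring
    · rw [Nat.choose_eq_zero_of_lt (show N - i < j - s by omega)]
      push_cast; ring
  · rw [Nat.choose_eq_zero_of_lt (show i < s by omega)]
    push_cast; ring


lemma coeffG (a b : ℝ) (N i j : ℕ) :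
    (((C a * X + C b)^i * (C 1 * X + C 1)^(N-i))).coeff j
      = ∑ s ∈ range (j+1), a^s * b^(i-s) * (i.choose s) * ((N-i).choose (j-s)) := by
  rw [coeff_mul, Nat.sum_antidiagonal_eq_sum_range_succ_mk]
  refine Finset.sum_congr rfl fun s hs => ?_
  rw [coeff_linear_pow, coeff_linear_pow, one_pow, one_pow, one_mul]
  ring

lemma innerSum (a b : ℝ) (hane : a ≠ 0) (hbval : b = -a⁻¹) (N i j : ℕ) :
    ∑ k ∈ Finset.Icc 1 (j + 1),
      (-1 : ℝ) ^ ((i:ℤ) + 1 - (k:ℕ)) * (i.choose (k-1) : ℝ) *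
        ((N - i).choose ((j+1) - k) : ℝ) * a ^ (2 * (k:ℤ) - ((i:ℤ)+1) - 1)
    = (((C a * X + C b)^i * (C 1 * X + C 1)^(N-i))).coeff j := by
  rw [coeffG]
  rw [show Finset.Icc 1 (j+1) = Finset.Ico 1 (j+2) by exact (Finset.Ico_add_one_right_eq_Icc 1 (j+1)).symm]
  rw [Finset.sum_Ico_eq_sum_range]
  rw [show j + 2 - 1 = j + 1 by omega]
  refine Finset.sum_congr rfl fun s hs => ?_
  rw [Finset.mem_range] at hs
  rw [show 1 + s - 1 = s by omega, show j + 1 - (1 + s) = j - s by omega]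
  have hcast : ((1 + s : ℕ) : ℤ) = 1 + (s:ℤ) := by push_cast; ring
  rw [hcast]
  by_cases h1 : s ≤ i
  · have e1 : (-1 : ℝ) ^ ((i:ℤ) + 1 - (1 + (s:ℤ))) = (-1 : ℝ) ^ (i - s : ℕ) := by
      rw [show (i:ℤ) + 1 - (1 + (s:ℤ)) = ((i - s : ℕ) : ℤ) by omega, zpow_natCast]
    have e2 : a ^ (2 * (1 + (s:ℤ)) - ((i:ℤ)+1) - 1) = a ^ s * (a ^ (i - s : ℕ))⁻¹ := by
      rw [show 2 * (1 + (s:ℤ)) - ((i:ℤ)+1) - 1 = (s:ℤ) + (-((i - s : ℕ) : ℤ)) by omega,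
        zpow_add₀ hane, zpow_natCast, zpow_neg, zpow_natCast]
    rw [e1, e2, hbval]
    rw [neg_pow (a⁻¹) (i - s), inv_pow]
    ring
  · rw [Nat.choose_eq_zero_of_lt (show i < s by omega)]
    push_cast
    ring


lemma RV_sum (a b : ℝ) (haa : a*a = a+1) (hbb : b*b = b+1) (N i j : ℕ)
    (hi : i ≤ N) (hj : j ≤ N) :
    ∑ k ∈ range (N+1), (i.choose (N - k) : ℝ) * (((C a*X + C b)^k * (C 1*X+C 1)^(N-k)).coeff j)
      = a^j * b^(N-j) * (((C a*X + C b)^i * (C 1*X+C 1)^(N-i)).coeff j) := by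
  rw [← Finset.sum_range_reflect]
  have step1 : ∀ m ∈ range (N+1),
      (i.choose (N - (N + 1 - 1 - m)) : ℝ) *
        (((C a*X + C b)^(N+1-1-m) * (C 1*X+C 1)^(N-(N+1-1-m))).coeff j)
      = ((i.choose m : ℝ) • (((C 1*X+C 1):Polynomial ℝ)^m * (C a*X + C b)^(N-m))).coeff j := by
    intro m hm
    rw [mem_range] at hm
    rw [show N + 1 - 1 - m = N - m by omega, show N - (N - m) = m by omega]
    rw [coeff_smul, smul_eq_mul, mul_comm (((C a * X + C b):Polynomial ℝ)^(N-m))]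
  rw [Finset.sum_congr rfl step1, ← finset_sum_coeff, sum_choose_poly _ _ N i hi]
  have hsum : ((C 1*X+C 1):Polynomial ℝ) + (C a*X + C b) = C (a*a) * X + C (b*b) := by
    rw [haa, hbb, C_add, C_add, C_1]
    ring
  rw [hsum]
  exact coeff_scale a b N i j hi hj

lemma VV_sum (a b : ℝ) (N i j : ℕ) (hi : i ≤ N) :
    ∑ l ∈ range (N+1), (((C a*X+C b)^i * (C 1*X+C 1)^(N-i)).coeff l) *
        ((-1:ℝ)^l * a^(N-l) * (((C a*X+C b)^l * (C 1*X+C 1)^(N-l)).coeff j))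
      = if j = i then (a*b - a*a)^i * (a - b)^(N-i) else 0 := by
  have key : ∑ l ∈ range (N+1), (((C a*X+C b)^i * (C 1*X+C 1)^(N-i)).coeff l) *
        ((-1:ℝ)^l * a^(N-l) * (((C a*X+C b)^l * (C 1*X+C 1)^(N-l)).coeff j))
      = (homP (C (-1) * (C a * X + C b)) (C a * (C 1 * X + C 1)) N
          ((C a*X+C b)^i * (C 1*X+C 1)^(N-i))).coeff j := by
    rw [homP, finset_sum_coeff]
    refine Finset.sum_congr rfl fun l hl => ?_
    have e : (C (-1:ℝ) * (C a * X + C b))^l * (C a * (C 1 * X + C 1))^(N-l)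
        = C ((-1:ℝ)^l * a^(N-l)) * ((C a*X+C b)^l * (C 1*X+C 1)^(N-l)) := by
      rw [mul_pow, mul_pow, ← C_pow, ← C_pow, C_mul]
      ring
    rw [e, coeff_C_mul, coeff_C_mul]
    try ring
  rw [key, homP_prod _ _ b a 1 1 N i hi]
  have eA : C a * (C (-1:ℝ) * (C a * X + C b)) + C b * (C a * (C 1 * X + C 1))
      = C (a*b - a*a) * X := by
    rw [C_sub, C_mul, C_mul, C_neg, C_1]
    ring
  have eB : C 1 * (C (-1:ℝ) * (C a * X + C b)) + C 1 * (C a * (C 1 * X + C 1))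
      = C (a - b) := by
    rw [C_sub, C_neg, C_1]
    ring
  rw [eA, eB]
  have e2 : (C (a*b - a*a) * X)^i * (C (a - b))^(N-i)
      = C ((a*b - a*a)^i * (a-b)^(N-i)) * X^i := by
    rw [mul_pow, ← C_pow, ← C_pow, C_mul]
    ring
  rw [e2, coeff_C_mul, coeff_X_pow]
  split_ifs <;> ring

/-- `V` diagonalizes the right-justified Pascal matrix `R`:
`V⁻¹ R V = diag(λ_j)` with `λ_j = (-1)^{n+j} a^{2j-n-1}`; equivalently (since
`V² = I`) `V R V = diag(λ_j)`. -/
theorem stmt9 (n : ℕ) (hn : 1 ≤ n) (a : ℝ) (ha : a = (1 + Real.sqrt 5) / 2)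
    (R : Matrix (Fin n) (Fin n) ℝ)
    (hR : ∀ i j : Fin n, R i j = (Nat.choose i.1 (n - (j.1 + 1)) : ℝ))
    (V : Matrix (Fin n) (Fin n) ℝ)
    (hV : ∀ i j : Fin n, V i j =
      (-1 : ℝ) ^ (j.1 + 1) * a ^ ((n : ℤ) - ((j.1 : ℤ) + 1)) *
        (Real.sqrt ((1 + a ^ 2) ^ (n - 1)))⁻¹ *
        ∑ k ∈ Finset.Icc 1 (j.1 + 1),
          (-1 : ℝ) ^ ((i.1 : ℤ) + 1 - k) * (Nat.choose i.1 (k - 1) : ℝ) *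
            (Nat.choose (n - (i.1 + 1)) ((j.1 + 1) - k) : ℝ) *
            a ^ (2 * (k : ℤ) - ((i.1 : ℤ) + 1) - 1)) :
    V⁻¹ * R * V =
        Matrix.diagonal (fun j : Fin n =>
          (-1 : ℝ) ^ (n + (j.1 + 1)) * a ^ (2 * ((j.1 : ℤ) + 1) - (n : ℤ) - 1)) ∧
      V * R * V =
        Matrix.diagonal (fun j : Fin n =>
          (-1 : ℝ) ^ (n + (j.1 + 1)) * a ^ (2 * ((j.1 : ℤ) + 1) - (n : ℤ) - 1)) := by
  obtain ⟨N, rfl⟩ : ∃ N, n = N + 1 := ⟨n - 1, by omega⟩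
  -- basic facts about the golden ratio
  have h5 : Real.sqrt 5 ^ 2 = 5 := Real.sq_sqrt (by norm_num)
  have h5nn : (0:ℝ) ≤ Real.sqrt 5 := Real.sqrt_nonneg 5
  have haa : a * a = a + 1 := by rw [ha]; nlinarith
  have hapos : 0 < a := by rw [ha]; nlinarith
  have hane : a ≠ 0 := ne_of_gt hapos
  set b : ℝ := 1 - a with hbdef
  have hab : a * b = -1 := by rw [hbdef]; linear_combination -haa
  have hbb : b * b = b + 1 := by rw [hbdef]; linear_combination haa
  have hbval : b = -a⁻¹ := by
    have h : a * b = a * (-a⁻¹) := by rw [mul_neg, mul_inv_cancel₀ hane, hab]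
    exact mul_left_cancel₀ hane h
  have ha2' : (1:ℝ) + a ^ 2 = a + 2 := by rw [sq]; linarith [haa]
  simp only [Nat.add_sub_cancel, Nat.succ_sub_succ, Nat.sub_zero] at hV hR
  set cc : ℝ := (Real.sqrt ((1 + a ^ 2) ^ N))⁻¹ with hccdef
  -- clean form of V
  have hVsig : ∀ i j : Fin (N+1), V i j =
      (-1:ℝ)^(j.1+1) * a^(N - j.1) * cc *
        (((C a * X + C b)^(i.1) * (C 1 * X + C 1)^(N - i.1)).coeff j.1) := by
    intro i j
    have hj : j.1 < N + 1 := j.isLt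
    rw [hV i j]
    rw [show ((N+1:ℕ):ℤ) - ((j.1:ℤ)+1) = ((N - j.1 : ℕ):ℤ) by omega, zpow_natCast]
    rw [innerSum a b hane hbval N i.1 j.1]
  -- the diagonal entries
  have hd : ∀ j : Fin (N+1),
      (-1:ℝ)^((N+1) + (j.1+1)) * a^(2*((j.1:ℤ)+1) - ((N+1:ℕ):ℤ) - 1)
        = a^(j.1) * b^(N - j.1) := by
    intro j
    have hj : j.1 < N + 1 := j.isLt
    have e2 : a ^ (2*((j.1:ℤ)+1) - ((N+1:ℕ):ℤ) - 1) = a ^ (j.1) * (a ^ (N - j.1 : ℕ))⁻¹ := by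
      rw [show 2*((j.1:ℤ)+1) - ((N+1:ℕ):ℤ) - 1 = (j.1:ℤ) + (-((N - j.1:ℕ):ℤ)) by omega,
        zpow_add₀ hane, zpow_natCast, zpow_neg, zpow_natCast]
    have e1 : (-1:ℝ)^((N+1) + (j.1+1)) = (-1:ℝ)^(N - j.1) := by
      rw [show (N+1) + (j.1+1) = (N - j.1) + 2*(j.1+1) by omega, pow_add, pow_mul]
      norm_num
    have e3 : ((-a⁻¹ : ℝ))^(N - j.1) = (-1:ℝ)^(N - j.1) * (a^(N - j.1))⁻¹ := by
      rw [neg_pow, inv_pow]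
    rw [e1, e2, hbval, e3]
    ring
  -- R * V = V * D
  have hRV : R * V = V * Matrix.diagonal (fun j : Fin (N+1) =>
      (-1 : ℝ) ^ ((N+1) + (j.1 + 1)) * a ^ (2 * ((j.1 : ℤ) + 1) - ((N+1:ℕ) : ℤ) - 1)) := by
    ext i j
    rw [Matrix.mul_apply, Matrix.mul_diagonal]
    have hi : i.1 ≤ N := Nat.lt_succ_iff.mp i.isLt
    have hj : j.1 ≤ N := Nat.lt_succ_iff.mp j.isLt
    have step : ∀ k : Fin (N+1), R i k * V k j =
        (fun k : ℕ => ((-1:ℝ)^(j.1+1) * a^(N - j.1) * cc) *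
          ((i.1.choose (N - k) : ℝ) *
            (((C a * X + C b)^k * (C 1 * X + C 1)^(N - k)).coeff j.1))) k.1 := by
      intro k
      rw [hR i k, hVsig k j]
      ring
    have key : ∑ k : Fin (N+1), R i k * V k j =
        ∑ k ∈ range (N+1), ((-1:ℝ)^(j.1+1) * a^(N - j.1) * cc) *
          ((i.1.choose (N - k) : ℝ) *
            (((C a * X + C b)^k * (C 1 * X + C 1)^(N - k)).coeff j.1)) :=
      (Finset.sum_congr rfl (fun k _ => step k)).trans
        (Fin.sum_univ_eq_sum_range (fun k : ℕ => ((-1:ℝ)^(j.1+1) * a^(N - j.1) * cc) *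
          ((i.1.choose (N - k) : ℝ) *
            (((C a * X + C b)^k * (C 1 * X + C 1)^(N - k)).coeff j.1))) (N+1))
    rw [key, ← Finset.mul_sum, RV_sum a b haa hbb N i.1 j.1 hi hj, hVsig i j, hd j]
    ring
  -- V * V = 1
  have hVV : V * V = 1 := by
    ext i j
    rw [Matrix.mul_apply, Matrix.one_apply]
    have hi : i.1 ≤ N := Nat.lt_succ_iff.mp i.isLt
    have hj : j.1 ≤ N := Nat.lt_succ_iff.mp j.isLt
    have step : ∀ l : Fin (N+1), V i l * V l j =
        (fun l : ℕ => (cc * cc * ((-1:ℝ)^(j.1+1) * a^(N - j.1)) * (-1)) *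
          ((((C a * X + C b)^(i.1) * (C 1 * X + C 1)^(N - i.1)).coeff l) *
            ((-1:ℝ)^l * a^(N - l) *
              (((C a * X + C b)^l * (C 1 * X + C 1)^(N - l)).coeff j.1)))) l.1 := by
      intro l
      rw [hVsig i l, hVsig l j]
      ring
    have key : ∑ l : Fin (N+1), V i l * V l j =
        ∑ l ∈ range (N+1), (cc * cc * ((-1:ℝ)^(j.1+1) * a^(N - j.1)) * (-1)) *
          ((((C a * X + C b)^(i.1) * (C 1 * X + C 1)^(N - i.1)).coeff l) *
            ((-1:ℝ)^l * a^(N - l) *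
              (((C a * X + C b)^l * (C 1 * X + C 1)^(N - l)).coeff j.1))) :=
      (Finset.sum_congr rfl (fun l _ => step l)).trans
        (Fin.sum_univ_eq_sum_range (fun l : ℕ =>
          (cc * cc * ((-1:ℝ)^(j.1+1) * a^(N - j.1)) * (-1)) *
          ((((C a * X + C b)^(i.1) * (C 1 * X + C 1)^(N - i.1)).coeff l) *
            ((-1:ℝ)^l * a^(N - l) *
              (((C a * X + C b)^l * (C 1 * X + C 1)^(N - l)).coeff j.1)))) (N+1))
    rw [key, ← Finset.mul_sum, VV_sum a b N i.1 j.1 hi]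
    have hcc2 : cc * cc = ((a+2)^N)⁻¹ := by
      rw [hccdef, ← mul_inv, Real.mul_self_sqrt (by positivity), ha2']
    have habm : a * b - a * a = -(a+2) := by rw [hab, haa]; ring
    have hab2 : a + 2 = a * (a - b) := by rw [hbdef]; linear_combination -2*haa
    have hne : ((a:ℝ)+2)^N ≠ 0 := by positivity
    by_cases hij : i = j
    · subst hij
      rw [if_pos rfl, if_pos rfl]
      have key2 : a^(N - i.1) * ((a+2)^(i.1) * (a-b)^(N - i.1)) = (a+2)^N := by
        calc a^(N - i.1) * ((a+2)^(i.1) * (a-b)^(N - i.1))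
            = (a^(N - i.1) * a^(i.1)) * ((a-b)^(i.1) * (a-b)^(N - i.1)) := by
              rw [hab2, mul_pow]; ring
          _ = a^N * (a-b)^N := by
              rw [← pow_add, ← pow_add, show N - i.1 + i.1 = N by omega,
                show i.1 + (N - i.1) = N by omega]
          _ = (a+2)^N := by rw [← mul_pow, ← hab2]
      have hs : ((-1:ℝ))^(i.1) * (-1:ℝ)^(i.1) = 1 := by
        rw [← mul_pow]; norm_num
      have h2 : (a*b - a*a)^(i.1) = (-1:ℝ)^(i.1) * (a+2)^(i.1) := by
        rw [habm, neg_pow]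
      calc cc * cc * ((-1:ℝ)^(i.1+1) * a^(N - i.1)) * (-1) *
            ((a*b - a*a)^(i.1) * (a-b)^(N - i.1))
          = ((-1:ℝ)^(i.1) * (-1)^(i.1)) *
              ((cc*cc) * (a^(N - i.1) * ((a+2)^(i.1) * (a-b)^(N - i.1)))) := by
            rw [h2]; ring
        _ = 1 * (((a+2)^N)⁻¹ * (a+2)^N) := by rw [hs, hcc2, key2]
        _ = 1 := by rw [one_mul, inv_mul_cancel₀ hne]
    · have hij' : ¬ (j.1 = i.1) := fun h => hij (Fin.ext h.symm)
      rw [if_neg hij', if_neg hij]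
      ring
  have hVinv : V⁻¹ = V := Matrix.inv_eq_left_inv hVV
  have main : V * R * V = Matrix.diagonal (fun j : Fin (N+1) =>
      (-1 : ℝ) ^ ((N+1) + (j.1 + 1)) * a ^ (2 * ((j.1 : ℤ) + 1) - ((N+1:ℕ) : ℤ) - 1)) := by
    calc V * R * V = V * (R * V) := by rw [Matrix.mul_assoc]
      _ = V * V * Matrix.diagonal _ := by rw [hRV, Matrix.mul_assoc]
      _ = _ := by rw [hVV, Matrix.one_mul]
  exact ⟨by rw [hVinv]; exact main, main⟩
end

section
/- The eigenvalues of the n×n matrix R(i,j) = C(i-1, n-j) are exactly { (-1)^{n+j} a^{2j-n-1} : 1 ≤ j ≤ n } where a = (1+√5)/2; in particular R is diagonalizable over ℝ. -/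
/-!
On coefficient rows of polynomials of degree `< n`, the right-justified Pascal matrix acts as
`q ↦ xⁿ⁻¹ q(1 + 1/x)`: substitute `x + 1`, then reverse. For a root `μ` of `x² = x + 1` we have
`μ(x + 1) + 1 = μx + μ²`, so this map sends `(φx + 1)ᵏ (ψx + 1)ⁿ⁻¹⁻ᵏ` to `φᵏψⁿ⁻¹⁻ᵏ` times itself.
These `n` eigenvalues equal `±φ^(2k+1-n)` and so have distinct absolute values; hence the
eigenvectors form a basis, which diagonalizes the matrix.
-/

open Polynomial Matrix
open scoped goldenRatio

section Diagonalization

variable {ι K : Type*} [Fintype ι] [DecidableEq ι]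

theorem Matrix.mul_eq_diagonal_mul_iff [CommSemiring K] {A Q : Matrix ι ι K} {μ : ι → K} :
    Q * A = diagonal μ * Q ↔ ∀ i, Q i ᵥ* A = μ i • Q i := by
  simp only [← ext_iff, funext_iff, diagonal_mul, Pi.smul_apply, smul_eq_mul]
  rfl

variable [Field K] {A Q : Matrix ι ι K} {μ : ι → K}

theorem Matrix.isUnit_det_of_mul_eq_diagonal_mul (hμ : Function.Injective μ) (hQ : ∀ i, Q i ≠ 0)
    (h : Q * A = diagonal μ * Q) : IsUnit Q.det := by
  have hrow (i : ι) : Module.End.HasEigenvector (vecMulLinear A) (μ i) (Q i) :=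
    ⟨Module.End.mem_eigenspace_iff.2 (mul_eq_diagonal_mul_iff.1 h i), hQ i⟩
  rw [← isUnit_iff_isUnit_det, ← linearIndependent_rows_iff_isUnit]
  exact Module.End.eigenvectors_linearIndependent' _ μ hμ _ hrow

theorem Matrix.spectrum_eq_range_of_mul_eq_diagonal_mul (hQ : IsUnit Q.det)
    (h : Q * A = diagonal μ * Q) : spectrum K A = Set.range μ := by
  obtain ⟨u, rfl⟩ := (isUnit_iff_isUnit_det Q).2 hQ
  rw [← spectrum_diagonal, ← spectrum.units_conjugate' (a := diagonal μ) (u := u), mul_assoc,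
    ← h, Units.inv_mul_cancel_left]

end Diagonalization

namespace Polynomial

variable {K : Type*} [CommSemiring K]

theorem coeff_comp_X_add_one (q : K[X]) {n : ℕ} (hq : q.natDegree < n) (m : ℕ) :
    (q.comp (X + 1)).coeff m = ∑ i ∈ Finset.range n, q.coeff i * (i.choose m : K) := by
  rw [comp_eq_sum_left, sum_over_range' _ (by simp) n hq, finsetSum_coeff]
  simp only [coeff_C_mul, coeff_X_add_one_pow]

theorem reflect_pow (p : K[X]) {N : ℕ} (hp : p.natDegree ≤ N) (k : ℕ) :
    reflect (N * k) (p ^ k) = reflect N p ^ k := by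
  induction k with
  | zero => simp
  | succ k ih =>
    rw [pow_succ, pow_succ, mul_add_one,
      reflect_mul _ _ ((natDegree_pow_le_of_le k hp).trans_eq (mul_comm k N)) hp, ih]

theorem comp_X_add_one_of_sq_eq {μ : K} (hμ : μ ^ 2 = μ + 1) :
    (C μ * X + 1).comp (X + 1) = C μ * X + C (μ ^ 2) := by
  rw [hμ]; simp only [add_comp, mul_comp, C_comp, X_comp, one_comp, C_add, C_1]; ring

theorem reflect_one_C_mul_X_add_C (μ ν : K) : reflect 1 (C μ * X + C ν) = C ν * X + C μ := by
  rw [reflect_add, reflect_C_mul, reflect_one_X, reflect_C, pow_one, mul_one, add_comm]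

theorem reflect_comp_X_add_one_pow_mul_pow {μ ν : K} (hμ : μ ^ 2 = μ + 1) (hν : ν ^ 2 = ν + 1)
    (k l : ℕ) :
    reflect (k + l) (((C μ * X + 1) ^ k * (C ν * X + 1) ^ l).comp (X + 1)) =
      C (μ ^ k * ν ^ l) * ((C μ * X + 1) ^ k * (C ν * X + 1) ^ l) := by
  have hreflect (c : K) (m : ℕ) :
      reflect m ((C c * X + C (c ^ 2)) ^ m) = C (c ^ m) * (C c * X + 1) ^ m := by
    have h := reflect_pow (C c * X + C (c ^ 2)) natDegree_linear_le m
    rw [one_mul] at h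
    rw [h, reflect_one_C_mul_X_add_C, C_pow, C_pow, ← mul_pow]
    ring
  have hdeg (c : K) (m : ℕ) : ((C c * X + C (c ^ 2)) ^ m).natDegree ≤ m :=
    (natDegree_pow_le_of_le m natDegree_linear_le).trans_eq (mul_one m)
  rw [mul_comp, pow_comp, pow_comp, comp_X_add_one_of_sq_eq hμ, comp_X_add_one_of_sq_eq hν,
    reflect_mul _ _ (hdeg μ k) (hdeg ν l), hreflect, hreflect, C_mul]
  ring

end Polynomial

section RightPascal

variable (K : Type*) [CommSemiring K]

def rightPascal (n : ℕ) : Matrix (Fin n) (Fin n) K :=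
  of fun i j => (i.1.choose (n - (j.1 + 1)) : K)

variable {K}

theorem coeff_vecMul_rightPascal {n : ℕ} (q : K[X]) (hq : q.natDegree < n) :
    (fun i : Fin n => q.coeff i) ᵥ* rightPascal K n =
      fun j : Fin n => (reflect (n - 1) (q.comp (X + 1))).coeff j := by
  ext j
  rw [coeff_reflect, revAt_le (by omega), coeff_comp_X_add_one q hq, ← Fin.sum_univ_eq_sum_range,
    show n - 1 - j = n - (j + 1) by omega]
  rfl

theorem coeff_pow_mul_pow_vecMul_rightPascal {μ ν : K} (hμ : μ ^ 2 = μ + 1) (hν : ν ^ 2 = ν + 1)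
    {n k : ℕ} (hk : k < n) :
    (fun i : Fin n => ((C μ * X + 1) ^ k * (C ν * X + 1) ^ (n - 1 - k)).coeff i) ᵥ*
        rightPascal K n =
      (μ ^ k * ν ^ (n - 1 - k)) •
        fun i : Fin n => ((C μ * X + 1) ^ k * (C ν * X + 1) ^ (n - 1 - k)).coeff i := by
  generalize hl : n - 1 - k = l
  have hdeg : ((C μ * X + 1) ^ k * (C ν * X + 1) ^ l).natDegree < n := by
    refine natDegree_mul_le.trans_lt ?_
    have hμk : ((C μ * X + 1) ^ k).natDegree ≤ k := by compute_degree
    have hνl : ((C ν * X + 1) ^ l).natDegree ≤ l := by compute_degree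
    omega
  rw [coeff_vecMul_rightPascal _ hdeg, show n - 1 = k + l by omega,
    reflect_comp_X_add_one_pow_mul_pow hμ hν]
  ext j
  simp only [coeff_C_mul, Pi.smul_apply, smul_eq_mul]

end RightPascal

noncomputable def pascalEigenvalue (n j : ℕ) : ℝ :=
  (-1) ^ (n + j) * φ ^ (2 * (j : ℤ) - n - 1)

theorem goldenRatio_pow_mul_goldenConj_pow (k l : ℕ) :
    φ ^ k * ψ ^ l = (-1) ^ l * φ ^ ((k : ℤ) - l) := by
  rw [← neg_neg ψ, ← Real.inv_goldenRatio, neg_pow, zpow_sub₀ Real.goldenRatio_ne_zero, inv_pow,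
    zpow_natCast, zpow_natCast]
  ring

theorem pascalEigenvalue_succ {n k : ℕ} (hk : k < n) :
    pascalEigenvalue n (k + 1) = φ ^ k * ψ ^ (n - 1 - k) := by
  rw [goldenRatio_pow_mul_goldenConj_pow, pascalEigenvalue,
    show n + (k + 1) = (n - 1 - k) + 2 * (k + 1) by omega, pow_add, pow_mul, neg_one_sq, one_pow,
    mul_one]
  congr 2
  push_cast
  omega

theorem pascalEigenvalue_injective (n : ℕ) : Function.Injective (pascalEigenvalue n) := by
  intro i j hij
  have habs := congrArg abs hij
  simp only [pascalEigenvalue, abs_mul, abs_pow, abs_neg, abs_one, one_pow, one_mul,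
    abs_of_pos (zpow_pos Real.goldenRatio_pos _)] at habs
  have := zpow_right_injective₀ Real.goldenRatio_pos Real.one_lt_goldenRatio.ne' habs
  omega

theorem Set.range_fin_add_one_eq_image_Icc {α : Type*} (f : ℕ → α) (n : ℕ) :
    Set.range (fun j : Fin n => f (j + 1)) = f '' Set.Icc 1 n := by
  ext x
  constructor
  · rintro ⟨j, rfl⟩
    exact ⟨j + 1, ⟨by omega, by omega⟩, rfl⟩
  · rintro ⟨m, ⟨hm₁, hm₂⟩, rfl⟩
    exact ⟨⟨m - 1, by omega⟩, by simp only [Nat.sub_add_cancel hm₁]⟩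

theorem stmt11_general (n : ℕ) (a : ℝ) (ha : a = (1 + Real.sqrt 5) / 2)
    (R : Matrix (Fin n) (Fin n) ℝ)
    (hR : ∀ i j : Fin n, R i j = (Nat.choose i.1 (n - (j.1 + 1)) : ℝ)) :
    spectrum ℝ R =
        (fun j : ℕ => (-1 : ℝ) ^ (n + j) * a ^ (2 * (j : ℤ) - (n : ℤ) - 1)) ''
          (Set.Icc 1 n) ∧
      ∃ P : Matrix (Fin n) (Fin n) ℝ, IsUnit P.det ∧
        P⁻¹ * R * P = Matrix.diagonal (fun j : Fin n =>
          (-1 : ℝ) ^ (n + (j.1 + 1)) * a ^ (2 * ((j.1 : ℤ) + 1) - (n : ℤ) - 1)) := by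
  obtain rfl : a = φ := ha
  obtain rfl : R = rightPascal ℝ n := Matrix.ext hR
  let Q : Matrix (Fin n) (Fin n) ℝ :=
    of fun k i => ((C φ * X + 1) ^ k.1 * (C ψ * X + 1) ^ (n - 1 - k)).coeff i
  have hQR : Q * rightPascal ℝ n = diagonal (fun k : Fin n => pascalEigenvalue n (k + 1)) * Q := by
    refine mul_eq_diagonal_mul_iff.2 fun k => ?_
    rw [pascalEigenvalue_succ k.2]
    exact coeff_pow_mul_pow_vecMul_rightPascal Real.goldenRatio_sq Real.goldenConj_sq k.2
  have hQ : IsUnit Q.det := by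
    refine isUnit_det_of_mul_eq_diagonal_mul
      ((pascalEigenvalue_injective n).comp (add_left_injective 1 |>.comp Fin.val_injective))
      (fun k hk => ?_) hQR
    simpa [Q, coeff_zero_eq_eval_zero] using congrFun hk ⟨0, k.pos⟩
  refine ⟨?_, Q⁻¹, isUnit_nonsing_inv_det Q hQ, ?_⟩
  · rw [spectrum_eq_range_of_mul_eq_diagonal_mul hQ hQR, Set.range_fin_add_one_eq_image_Icc]
    rfl
  · rw [nonsing_inv_nonsing_inv Q hQ, hQR, mul_assoc, mul_nonsing_inv Q hQ, mul_one]
    simp only [pascalEigenvalue, Nat.cast_add, Nat.cast_one]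

/-- The eigenvalues of the right-justified Pascal matrix `R(i,j) = C(i-1,n-j)` are
exactly `(-1)^{n+j} a^{2j-n-1}`, `1 ≤ j ≤ n`, with `a` the golden ratio; in
particular `R` is diagonalizable over `ℝ`. -/
theorem stmt11 (n : ℕ) (hn : 1 ≤ n) (a : ℝ) (ha : a = (1 + Real.sqrt 5) / 2)
    (R : Matrix (Fin n) (Fin n) ℝ)
    (hR : ∀ i j : Fin n, R i j = (Nat.choose i.1 (n - (j.1 + 1)) : ℝ)) :
    spectrum ℝ R =
        (fun j : ℕ => (-1 : ℝ) ^ (n + j) * a ^ (2 * (j : ℤ) - (n : ℤ) - 1)) ''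
          (Set.Icc 1 n) ∧
      ∃ P : Matrix (Fin n) (Fin n) ℝ, IsUnit P.det ∧
        P⁻¹ * R * P = Matrix.diagonal (fun j : Fin n =>
          (-1 : ℝ) ^ (n + (j.1 + 1)) * a ^ (2 * ((j.1 : ℤ) + 1) - (n : ℤ) - 1)) :=
  stmt11_general n a ha R hR
end

section
/- Generalization: let x be an element of a field (or indeterminate) and let a satisfy a^2 = a x + 1 with a ≠ 0. Let R(x) be the n×n matrix with (i,j) entry C(i-1, n-j) x^{i+j-n-1}. Then for each p with 1 ≤ p ≤ n, the vector u_p with entries u(i,p) = Σ_{k=1}^{p} (-1)^{i-k} C(i-1,k-1) C(n-i,p-k) a^{2k-i-1} satisfies R(x) u_p = (-1)^{n+p} a^{2p-n-1} u_p. -/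
open Polynomial Finset

namespace Stmt13Aux

variable {F : Type*} [Field F]

lemma coeffLin (c d : F) (s k : ℕ) :
    ((C c * X + C d)^s).coeff k = (s.choose k : F) * c^k * d^(s-k) := by
  rw [add_pow, finset_sum_coeff]
  have h : ∀ m ∈ Finset.range (s+1),
      ((C c * X) ^ m * C d ^ (s - m) * (s.choose m : F[X])).coeff k
        = if k = m then (s.choose k : F) * c^k * d^(s-k) else 0 := by
    intro m hm
    have : (C c * X) ^ m * C d ^ (s - m) * (s.choose m : F[X])
        = C ((s.choose m : F) * c^m * d^(s-m)) * X ^ m := by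
      simp only [mul_pow, ← C_pow, C_mul, C_eq_natCast]
      ring
    rw [this, coeff_C_mul, coeff_X_pow]
    split_ifs with h1
    · subst h1; simp
    · simp
  rw [Finset.sum_congr rfl h, Finset.sum_ite_eq (Finset.range (s+1)) k]
  split_ifs with h2
  · rfl
  · simp at h2
    rw [Nat.choose_eq_zero_of_lt (by omega)]
    simp

lemma coeffMulRange (f g : F[X]) (q : ℕ) :
    (f * g).coeff q = ∑ k ∈ range (q+1), f.coeff k * g.coeff (q-k) := by
  rw [coeff_mul, Finset.Nat.sum_antidiagonal_eq_sum_range_succ_mk]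

lemma neg_one_parity (s t : ℕ) (h : s % 2 = t % 2) : (-1 : F)^s = (-1 : F)^t := by
  rw [neg_one_pow_eq_pow_mod_two, h, ← neg_one_pow_eq_pow_mod_two]

lemma W_expand (a : F) (s t q : ℕ) :
    (((C a * X - C a⁻¹)^s * (1 + X)^t)).coeff q
      = ∑ k ∈ range (q+1), (s.choose k : F) * a^k * (-a⁻¹)^(s-k) * (t.choose (q-k) : F) := by
  rw [coeffMulRange]
  refine Finset.sum_congr rfl fun k _ => ?_
  have h1 : (C a * X - C a⁻¹ : F[X]) = C a * X + C (-a⁻¹) := by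
    rw [map_neg]; ring
  have h2 : (1 + X : F[X]) = C (1:F) * X + C 1 := by rw [C_1]; ring
  rw [h1, h2, coeffLin, coeffLin]
  ring

lemma DA_expand (a : F) (s t q : ℕ) :
    (((C (a^2) * X + C (a⁻¹^2))^s * (C a * X - C a⁻¹)^t)).coeff q
      = ∑ k ∈ range (q+1), (s.choose k : F) * (a^2)^k * (a⁻¹^2)^(s-k)
          * ((t.choose (q-k) : F) * a^(q-k) * (-a⁻¹)^(t-(q-k))) := by
  rw [coeffMulRange]
  refine Finset.sum_congr rfl fun k _ => ?_
  have h1 : (C a * X - C a⁻¹ : F[X]) = C a * X + C (-a⁻¹) := by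
    rw [map_neg]; ring
  rw [h1, coeffLin, coeffLin]
  try ring

lemma u_eq (a : F) (ha0 : a ≠ 0) (n p i : ℕ) (hi : i < n) (hp1 : 1 ≤ p) :
    (∑ k ∈ Finset.Icc 1 p,
      (-1 : F) ^ ((i : ℤ) + 1 - k) * (Nat.choose i (k - 1) : F) *
        (Nat.choose (n - (i + 1)) (p - k) : F) * a ^ (2 * (k : ℤ) - ((i : ℤ) + 1) - 1))
    = (((C a * X - C a⁻¹)^i * (1 + X)^(n-1-i))).coeff (p-1) := by
  rw [W_expand]
  have hq : p - 1 + 1 = p := by omega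
  rw [hq, ← Finset.Ico_add_one_right_eq_Icc, Finset.sum_Ico_eq_sum_range]
  have hp' : p + 1 - 1 = p := by omega
  rw [hp']
  refine Finset.sum_congr rfl fun k hk => ?_
  simp only [Finset.mem_range] at hk
  have e1 : 1 + k - 1 = k := by omega
  have e2 : p - (1 + k) = p - 1 - k := by omega
  have e3 : n - (i + 1) = n - 1 - i := by omega
  rw [e1, e2, e3]
  rcases le_or_gt k i with h | h
  · have e4 : (i : ℤ) + 1 - (1 + k : ℕ) = ((i - k : ℕ) : ℤ) := by push_cast; omega
    have e5 : (2 * ((1 + k : ℕ) : ℤ) - ((i:ℤ)+1) - 1) = (k : ℤ) + (-((i - k : ℕ) : ℤ)) := by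
      push_cast; omega
    rw [e4, e5, zpow_natCast, zpow_add₀ ha0, zpow_natCast, zpow_neg, zpow_natCast,
      ← inv_pow, neg_pow (a⁻¹)]
    ring
  · rw [Nat.choose_eq_zero_of_lt h]
    simp

lemma eig (a : F) (ha0 : a ≠ 0) (n p i : ℕ) (hi : i < n) (hp1 : 1 ≤ p) (hpn : p ≤ n) :
    (((C (a^2) * X + C (a⁻¹^2))^i * (C a * X - C a⁻¹)^(n-1-i))).coeff (p-1)
      = (-1 : F) ^ (n + p) * a ^ (2 * (p : ℤ) - (n : ℤ) - 1)
        * (((C a * X - C a⁻¹)^i * (1 + X)^(n-1-i))).coeff (p-1) := by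
  rw [DA_expand, W_expand, Finset.mul_sum]
  refine Finset.sum_congr rfl fun k hk => ?_
  simp only [Finset.mem_range] at hk
  have hk' : k ≤ p - 1 := by omega
  rcases le_or_gt k i with h1 | h1
  swap
  · rw [Nat.choose_eq_zero_of_lt h1]; ring
  rcases le_or_gt (p - 1 - k) (n - 1 - i) with h2 | h2
  swap
  · rw [Nat.choose_eq_zero_of_lt h2]; ring
  -- introduce slack variables
  obtain ⟨d1, rfl⟩ : ∃ d1, i = k + d1 := ⟨i - k, by omega⟩
  obtain ⟨d2, hp2⟩ : ∃ d2, p = k + d2 + 1 := ⟨p - 1 - k, by omega⟩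
  obtain ⟨e1, hne⟩ : ∃ e1, n = k + d1 + d2 + e1 + 1 := ⟨n - 1 - (k + d1) - d2, by omega⟩
  subst hp2; subst hne
  have e2 : k + d1 + d2 + e1 + 1 - 1 - (k + d1) = d2 + e1 := by omega
  have e3 : k + d2 + 1 - 1 - k = d2 := by omega
  rw [e2, e3]
  have e4 : k + d1 - k = d1 := by omega
  have e5 : d2 + e1 - d2 = e1 := by omega
  rw [e4, e5]
  have hz : a ^ (2 * ((k + d2 + 1 : ℕ) : ℤ) - ((k + d1 + d2 + e1 + 1 : ℕ) : ℤ) - 1)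
      = a ^ k * a ^ d2 * (a⁻¹) ^ d1 * (a⁻¹) ^ e1 := by
    rw [show (2 * ((k + d2 + 1 : ℕ) : ℤ) - ((k + d1 + d2 + e1 + 1 : ℕ) : ℤ) - 1)
        = (k : ℤ) + (d2 : ℤ) + (-(d1 : ℤ)) + (-(e1 : ℤ)) by push_cast; ring]
    rw [zpow_add₀ ha0, zpow_add₀ ha0, zpow_add₀ ha0]
    simp [zpow_natCast, zpow_neg, ← inv_pow]
  rw [hz]
  have hs : (-1 : F) ^ (k + d1 + d2 + e1 + 1 + (k + d2 + 1)) = (-1 : F) ^ (d1 + e1) :=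
    neg_one_parity _ _ (by omega)
  rw [hs, pow_add]
  simp only [neg_pow (a⁻¹)]
  ring_nf
  rw [pow_mul]
  norm_num

end Stmt13Aux

open Stmt13Aux in
/-- Generalization: if `a² = a x + 1` and `a ≠ 0` in a field, then the matrix
`R(x)` with entries `C(i-1,n-j) x^{i+j-n-1}` has eigenvector `u_p` with eigenvalue
`(-1)^{n+p} a^{2p-n-1}`. -/
theorem stmt13 (F : Type*) [Field F] (n : ℕ) (hn : 1 ≤ n)
    (x a : F) (ha0 : a ≠ 0) (ha : a ^ 2 = a * x + 1)
    (p : ℕ) (hp1 : 1 ≤ p) (hpn : p ≤ n)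
    (R : Matrix (Fin n) (Fin n) F)
    (hR : ∀ i j : Fin n, R i j = (Nat.choose i.1 (n - (j.1 + 1)) : F) *
      x ^ (((i.1 : ℤ) + 1) + ((j.1 : ℤ) + 1) - (n : ℤ) - 1))
    (u : Fin n → F)
    (hu : ∀ i : Fin n, u i = ∑ k ∈ Finset.Icc 1 p,
      (-1 : F) ^ ((i.1 : ℤ) + 1 - k) * (Nat.choose i.1 (k - 1) : F) *
        (Nat.choose (n - (i.1 + 1)) (p - k) : F) * a ^ (2 * (k : ℤ) - ((i.1 : ℤ) + 1) - 1)) :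
    R.mulVec u = ((-1 : F) ^ (n + p) * a ^ (2 * (p : ℤ) - (n : ℤ) - 1)) • u := by
  classical
  set A : F[X] := C a * X - C a⁻¹ with hA
  set B : F[X] := 1 + X with hB
  set D : F[X] := C (a^2) * X + C (a⁻¹^2) with hDdef
  have hval : ∀ j : Fin n, u j = (A ^ (j : ℕ) * B ^ (n - 1 - (j : ℕ))).coeff (p-1) :=
    fun j => (hu j).trans (u_eq a ha0 n p j j.2 hp1)
  have hD : C x * A + B = D := by
    have hxa : a ^ 2 = x * a + 1 := by linear_combination ha
    have hxai : a⁻¹ ^ 2 = 1 - x * a⁻¹ := by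
      field_simp
      linear_combination -ha
    rw [hA, hB, hDdef, hxa, hxai]
    simp only [C_sub, C_add, C_mul, C_1]
    ring
  funext i
  have hin : (i : ℕ) < n := i.2
  rw [Pi.smul_apply, smul_eq_mul]
  have hmv : R.mulVec u i = ∑ j : Fin n, R i j * u j := by
    simp [Matrix.mulVec, dotProduct]
  rw [hmv]
  -- the summand as a function of ℕ
  set f : ℕ → F := fun j =>
    (Nat.choose i.1 (n - (j + 1)) : F) * x ^ (((i.1 : ℤ) + 1) + ((j : ℤ) + 1) - (n : ℤ) - 1)
      * (A ^ j * B ^ (n - 1 - j)).coeff (p-1) with hf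
  have h1 : ∑ j : Fin n, R i j * u j = ∑ j ∈ Finset.range n, f j := by
    rw [← Fin.sum_univ_eq_sum_range]
    refine Finset.sum_congr rfl fun j _ => ?_
    rw [hR, hval, hf]
  have h2 : ∑ j ∈ Finset.range n, f j = ∑ m ∈ Finset.range n, f (n - 1 - m) :=
    (Finset.sum_range_reflect f n).symm
  have h3 : ∑ m ∈ Finset.range n, f (n - 1 - m)
      = ∑ m ∈ Finset.range (i.1 + 1), f (n - 1 - m) := by
    refine (Finset.sum_subset (by intro m hm; simp at hm ⊢; omega) ?_).symm
    intro m hm hm'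
    simp only [Finset.mem_range] at hm hm'
    have hmi : i.1 < m := by omega
    have : n - (n - 1 - m + 1) = m := by omega
    rw [hf]
    simp only [this, Nat.choose_eq_zero_of_lt hmi, Nat.cast_zero, zero_mul]
  have h4 : ∀ m ∈ Finset.range (i.1 + 1),
      f (n - 1 - m) = ((C ((Nat.choose i.1 m : F) * x ^ (i.1 - m)) * (A ^ (i.1 - m) * B ^ m))
        * A ^ (n - 1 - i.1)).coeff (p-1) := by
    intro m hm
    simp only [Finset.mem_range] at hm
    have hmi : m ≤ i.1 := by omega
    have e1 : n - (n - 1 - m + 1) = m := by omega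
    have e2 : n - 1 - (n - 1 - m) = m := by omega
    have e3 : ((i.1 : ℤ) + 1) + (((n - 1 - m : ℕ) : ℤ) + 1) - (n : ℤ) - 1 = ((i.1 - m : ℕ) : ℤ) := by
      push_cast
      omega
    have e4 : A ^ (n - 1 - m) = A ^ (i.1 - m) * A ^ (n - 1 - i.1) := by
      rw [← pow_add]
      congr 1
      omega
    rw [hf]
    simp only [e1, e2, e3, zpow_natCast, e4]
    conv_rhs => rw [mul_assoc, coeff_C_mul]
    rw [show A ^ (i.1 - m) * A ^ (n - 1 - i.1) * B ^ m
        = A ^ (i.1 - m) * B ^ m * A ^ (n - 1 - i.1) by ring]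
  have h5 : ∑ m ∈ Finset.range (i.1 + 1),
      ((C ((Nat.choose i.1 m : F) * x ^ (i.1 - m)) * (A ^ (i.1 - m) * B ^ m))
        * A ^ (n - 1 - i.1)).coeff (p-1)
      = ((D ^ i.1) * A ^ (n - 1 - i.1)).coeff (p-1) := by
    rw [← finset_sum_coeff]
    congr 1
    rw [← Finset.sum_mul]
    congr 1
    have : ∑ m ∈ Finset.range (i.1 + 1),
        C ((Nat.choose i.1 m : F) * x ^ (i.1 - m)) * (A ^ (i.1 - m) * B ^ m)
        = (B + C x * A) ^ i.1 := by
      rw [add_pow]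
      refine Finset.sum_congr rfl fun m hm => ?_
      rw [C_mul, C_pow, C_eq_natCast, mul_pow]
      ring
    rw [this, add_comm B (C x * A), hD]
  rw [h1, h2, h3, Finset.sum_congr rfl h4, h5]
  rw [hval i]
  exact eig a ha0 n p i.1 hin hp1 hpn
end

section
/- For the n×n right-justified Pascal matrix R(i,j) = C(i-1, n-j), the trace of R equals Σ_{j=1}^n (-1)^{n+j} a^{2j-n-1} where a = (1+√5)/2; equivalently, trace(R) = Σ_{i=1}^{n} C(i-1, n-i) = F_n if n is interpreted via the Fibonacci diagonal sum (trace R = Σ_i C(i-1,n-i) equals the Fibonacci number F_n). -/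
open Real goldenRatio

lemma fib_diag (n : ℕ) (hn : 1 ≤ n) :
    ∑ i ∈ Finset.range n, Nat.choose i (n - 1 - i) = Nat.fib n := by
  obtain ⟨m, rfl⟩ := Nat.exists_eq_add_of_le hn
  rw [add_comm, Nat.fib_succ_eq_sum_choose,
    Finset.Nat.sum_antidiagonal_eq_sum_range_succ_mk]
  apply Finset.sum_congr rfl
  intro i hi
  congr 1

lemma eig_sum (n : ℕ) (hn : 1 ≤ n) :
    ∑ j ∈ Finset.Icc 1 n, (-1 : ℝ) ^ (n + j) * goldenRatio ^ (2 * (j : ℤ) - (n : ℤ) - 1)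
      = (Nat.fib n : ℝ) := by
  have hφ0 : goldenRatio ≠ 0 := goldenRatio_ne_zero
  have hψ : goldenConj = -goldenRatio⁻¹ := by
    rw [← inv_inv goldenConj, inv_goldenConj, inv_neg]
  have key : ∀ i ∈ Finset.range n,
      (-1 : ℝ) ^ (n + (1 + i)) * goldenRatio ^ (2 * ((1 + i : ℕ) : ℤ) - (n : ℤ) - 1)
        = goldenRatio ^ i * goldenConj ^ (n - 1 - i) := by
    intro i hi
    simp only [Finset.mem_range] at hi
    have hsign : (-1 : ℝ) ^ (n + (1 + i)) = (-1 : ℝ) ^ (n - 1 - i) := by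
      have h : n + (1 + i) = (n - 1 - i) + 2 * (i + 1) := by omega
      rw [h, pow_add, pow_mul]
      norm_num
    have h3 : goldenRatio ^ (2 * ((1 + i : ℕ) : ℤ) - (n : ℤ) - 1)
        = goldenRatio ^ i * (goldenRatio⁻¹) ^ (n - 1 - i) := by
      rw [inv_pow, ← zpow_natCast goldenRatio i, ← zpow_natCast goldenRatio (n - 1 - i),
        ← zpow_neg, ← zpow_add₀ hφ0]
      congr 1
      push_cast
      omega
    have h4 : (-goldenRatio⁻¹ : ℝ) ^ (n - 1 - i)
        = (-1 : ℝ) ^ (n - 1 - i) * (goldenRatio⁻¹) ^ (n - 1 - i) := by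
      rw [neg_pow]
    rw [hψ, h4, hsign, h3]
    ring
  rw [← Finset.Ico_add_one_right_eq_Icc, Finset.sum_Ico_eq_sum_range]
  simp only [Nat.add_sub_cancel]
  rw [Finset.sum_congr rfl key, Real.coe_fib_eq]
  have h5 : Real.sqrt 5 ≠ 0 := by positivity
  rw [eq_div_iff h5, ← goldenRatio_sub_goldenConj, geom_sum₂_mul]

/-- The trace of the right-justified Pascal matrix equals the sum of the eigenvalues
`(-1)^{n+j} a^{2j-n-1}` and also equals the Fibonacci number `F_n`
(diagonal sum `∑_i C(i-1, n-i)`). -/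
theorem stmt14 (n : ℕ) (hn : 1 ≤ n) (a : ℝ) (ha : a = (1 + Real.sqrt 5) / 2)
    (R : Matrix (Fin n) (Fin n) ℝ)
    (hR : ∀ i j : Fin n, R i j = (Nat.choose i.1 (n - (j.1 + 1)) : ℝ)) :
    Matrix.trace R =
        ∑ j ∈ Finset.Icc 1 n, (-1 : ℝ) ^ (n + j) * a ^ (2 * (j : ℤ) - (n : ℤ) - 1) ∧
      Matrix.trace R = (Nat.fib n : ℝ) := by
  have htr : Matrix.trace R = (Nat.fib n : ℝ) := by
    rw [Matrix.trace]
    simp only [Matrix.diag, hR]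
    have h1 : ∑ x : Fin n, ((x.1.choose (n - (x.1 + 1)) : ℝ))
        = ∑ x : Fin n, ((x.1.choose (n - 1 - x.1) : ℝ)) := by
      apply Finset.sum_congr rfl
      intro x _
      congr 2
      omega
    rw [h1, Fin.sum_univ_eq_sum_range (fun x => ((x.choose (n - 1 - x) : ℝ))) n,
      ← fib_diag n hn, Nat.cast_sum]
  have ha' : a = goldenRatio := ha
  refine ⟨?_, htr⟩
  rw [htr, ha', eig_sum n hn]
end

section
/- For integers i, n, p with 1 ≤ p ≤ n and 1 ≤ i ≤ n, and a a root of a^2 = a + 1, the following polynomial identity in a holds: Σ_{j=1}^{n} C(i-1, n-j) Σ_{k=1}^{p} (-1)^{j-k} C(j-1,k-1) C(n-j,p-k) a^{2k-j-1} = (-1)^{n+p} a^{2p-n-1} Σ_{k=1}^{p} (-1)^{i-k} C(i-1,k-1) C(n-i,p-k) a^{2k-i-1}. -/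
open Polynomial Finset

lemma coeff_one_add_CX_pow {F : Type*} [CommRing F] (r : F) (m k : ℕ) :
    ((1 + C r * X : F[X]) ^ m).coeff k = (m.choose k : F) * r ^ k := by
  rw [add_comm, add_pow, finset_sum_coeff]
  have h : ∀ t ∈ range (m+1),
      ((C r * X) ^ t * 1 ^ (m - t) * (m.choose t : F[X])).coeff k
        = if t = k then (m.choose k : F) * r ^ k else 0 := by
    intro t ht
    rw [one_pow, mul_one, mul_pow, ← C_pow, ← C_eq_natCast, mul_comm (C (r^t)) (X^t),
      mul_assoc, ← C_mul, mul_comm (X^t) _, coeff_C_mul, coeff_X_pow]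
    by_cases h : t = k
    · subst h; rw [if_pos rfl, if_pos rfl, mul_one]; ring
    · rw [if_neg (Ne.symm h), if_neg h, mul_zero]
  rw [Finset.sum_congr rfl h, Finset.sum_ite_eq' (range (m+1)) k]
  split_ifs with h
  · rfl
  · rw [mem_range, not_lt] at h
    rw [Nat.choose_eq_zero_of_lt h]
    simp

lemma coeff_mul_pows {F : Type*} [CommRing F] (r s : F) (m1 m2 pp : ℕ) (hp : 1 ≤ pp) :
    ((1 + C r * X) ^ m1 * (1 + C s * X) ^ m2 : F[X]).coeff (pp - 1)
      = ∑ x ∈ range pp,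
          (m1.choose x : F) * r ^ x * ((m2.choose (pp-1-x) : F) * s ^ (pp-1-x)) := by
  rw [coeff_mul, Nat.sum_antidiagonal_eq_sum_range_succ_mk]
  have h : (pp-1).succ = pp := by omega
  rw [h]
  exact sum_congr rfl fun x hx => by rw [coeff_one_add_CX_pow, coeff_one_add_CX_pow]

lemma inner_sum_eq {F : Type*} [Field F] (a : F) (ha0 : a ≠ 0) (n p j : ℕ) (hp : 1 ≤ p) :
    ∑ k ∈ Icc 1 p, (-1:F)^((j:ℤ)-k) * ((j-1).choose (k-1) : F) *
        ((n-j).choose (p-k) : F) * a^(2*(k:ℤ)-j-1)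
      = (-a⁻¹)^j * (-a) *
          ((1 + C (-a^2) * X)^(j-1) * (1 + C (1:F) * X)^(n-j)).coeff (p-1) := by
  have key : ∀ m : ℕ, (-1:F)^((j:ℤ)-(↑(1+m))) * a^(2*((1+m:ℕ):ℤ)-j-1)
      = (-a⁻¹)^j * (-a) * (-a^2)^m := by
    intro m
    have e1 : ((j:ℤ) - ↑(1+m)) = (j:ℤ) - ((1+m:ℕ):ℤ) := by push_cast; ring
    have e2 : (2*((1+m:ℕ):ℤ)-j-1) = ((2*m+1:ℕ):ℤ) - (j:ℕ) := by push_cast; ring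
    rw [e1, e2, zpow_sub₀ (by norm_num : (-1:F) ≠ 0), zpow_sub₀ ha0,
      zpow_natCast, zpow_natCast, zpow_natCast, zpow_natCast,
      div_eq_mul_inv, div_eq_mul_inv, ← inv_pow, ← inv_pow, inv_neg, inv_one]
    ring
  rw [coeff_mul_pows _ _ _ _ _ hp, ← Finset.Ico_add_one_right_eq_Icc, Finset.sum_Ico_eq_sum_range,
    Nat.add_sub_cancel, Finset.mul_sum]
  refine sum_congr rfl fun m hm => ?_
  have h1 : 1 + m - 1 = m := by omega
  have h2 : p - (1 + m) = p - 1 - m := by omega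
  rw [h1, h2]
  calc (-1:F)^((j:ℤ)-(↑(1+m))) * ((j-1).choose m : F) * ((n-j).choose (p-1-m) : F)
        * a^(2*((1+m:ℕ):ℤ)-j-1)
      = ((-1:F)^((j:ℤ)-(↑(1+m))) * a^(2*((1+m:ℕ):ℤ)-j-1)) *
          (((j-1).choose m : F) * ((n-j).choose (p-1-m) : F)) := by ring
    _ = _ := by rw [key m]; ring

lemma outer_poly {F : Type*} [Field F] (a : F) (ha : a^2 = a+1) (n i : ℕ)
    (hi1 : 1 ≤ i) (hin : i ≤ n) :
    ∑ m ∈ range n, C (((i-1).choose m : F) * (-a)^m) *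
        ((1 + C (-a^2) * X)^(n-1-m) * (1 + C (1:F) * X)^m)
      = C ((-a⁻¹ : F)^(i-1)) * ((1 + C (-a^2)*X)^(n-i) * (1 + C (a^4)*X)^(i-1)) := by
  have hinv : a⁻¹ = a - 1 := inv_eq_of_mul_eq_one_right (by linear_combination ha)
  rw [← Finset.sum_subset (Finset.range_subset_range.2 hin) (fun m _ hm => by
    rw [mem_range, not_lt] at hm
    rw [Nat.choose_eq_zero_of_lt (by omega), Nat.cast_zero, zero_mul, map_zero, zero_mul])]
  set A : F[X] := 1 + C (-a^2) * X with hAdef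
  set B : F[X] := C (-a) * (1 + C (1:F) * X) with hBdef
  have hterm : ∀ m ∈ range i, C (((i-1).choose m : F) * (-a)^m) * (A^(n-1-m) * (1 + C (1:F) * X)^m)
      = A^(n-i) * (B^m * A^(i-1-m) * ((i-1).choose m : F[X])) := by
    intro m hm
    rw [mem_range] at hm
    have e : n - 1 - m = (n-i) + (i-1-m) := by omega
    rw [e, pow_add, hBdef, mul_pow, ← C_pow, map_mul, ← C_eq_natCast]
    ring
  rw [Finset.sum_congr rfl hterm, ← Finset.mul_sum,
    show range i = range ((i-1)+1) from by congr 1; omega, ← add_pow]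
  have hBA : B + A = C (-a⁻¹ : F) * (1 + C (a ^ 4) * X) := by
    have e1 : (1:F) + -a = -a⁻¹ := by rw [hinv]; ring
    have e2 : (-a:F) + -a^2 = -a⁻¹ * a^4 := by
      rw [hinv]; linear_combination (a^3 + a) * ha
    rw [hBdef, hAdef]
    calc C (-a) * (1 + C (1:F) * X) + (1 + C (-a^2) * X)
        = C ((1:F) + -a) + C ((-a:F) + -a^2) * X := by
          simp only [map_add, map_neg, map_one, map_pow]; ring
      _ = C (-a⁻¹ : F) + C (-a⁻¹ * a^4 : F) * X := by rw [e1, e2]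
      _ = _ := by rw [map_mul]; ring
  rw [hBA, mul_pow, ← C_pow]
  ring

lemma coeff_GH {F : Type*} [Field F] (a : F) (n i p : ℕ) (hp : 1 ≤ p) :
    ((1 + C (-a^2) * X)^(n-i) * (1 + C (a^4) * X)^(i-1) : F[X]).coeff (p-1)
      = (-a^2)^(p-1) *
        ((1 + C (-a^2) * X)^(i-1) * (1 + C (1:F) * X)^(n-i)).coeff (p-1) := by
  rw [coeff_mul_pows _ _ _ _ _ hp, coeff_mul_pows _ _ _ _ _ hp, Finset.mul_sum,
    ← Finset.sum_range_reflect]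
  refine sum_congr rfl fun x hx => ?_
  rw [mem_range] at hx
  have e : p - 1 - (p - 1 - x) = x := by omega
  rw [e]
  have hsplit : p - 1 = (p - 1 - x) + x := by omega
  have hkey := pow_add (-a^2 : F) (p-1-x) x
  rw [← hsplit] at hkey
  rw [hkey, show (a^4:F) = (-a^2) * (-a^2) from by ring, mul_pow]
  ring

/-- The eigenvector identity as a scalar identity in any field of characteristic 0
in which `a² = a + 1`:
`∑_j C(i-1,n-j) ∑_k (-1)^{j-k} C(j-1,k-1) C(n-j,p-k) a^{2k-j-1}
  = (-1)^{n+p} a^{2p-n-1} ∑_k (-1)^{i-k} C(i-1,k-1) C(n-i,p-k) a^{2k-i-1}`. -/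
theorem stmt15 (F : Type*) [Field F] [CharZero F] (a : F) (ha : a ^ 2 = a + 1)
    (n i p : ℕ) (hp1 : 1 ≤ p) (hpn : p ≤ n) (hi1 : 1 ≤ i) (hin : i ≤ n) :
    ∑ j ∈ Finset.Icc 1 n, (Nat.choose (i - 1) (n - j) : F) *
        ∑ k ∈ Finset.Icc 1 p,
          (-1 : F) ^ ((j : ℤ) - k) * (Nat.choose (j - 1) (k - 1) : F) *
            (Nat.choose (n - j) (p - k) : F) * a ^ (2 * (k : ℤ) - (j : ℤ) - 1) =
      (-1 : F) ^ (n + p) * a ^ (2 * (p : ℤ) - (n : ℤ) - 1) *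
        ∑ k ∈ Finset.Icc 1 p,
          (-1 : F) ^ ((i : ℤ) - k) * (Nat.choose (i - 1) (k - 1) : F) *
            (Nat.choose (n - i) (p - k) : F) * a ^ (2 * (k : ℤ) - (i : ℤ) - 1) := by
  have ha0 : a ≠ 0 := by intro h; rw [h] at ha; norm_num at ha
  rw [Finset.sum_congr rfl (fun j _ => by rw [inner_sum_eq a ha0 n p j hp1]),
    inner_sum_eq a ha0 n p i hp1]
  -- reindex the outer sum
  have step1 : ∑ j ∈ Icc 1 n, ((i-1).choose (n-j) : F) *
        ((-a⁻¹)^j * (-a) *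
          ((1 + C (-a^2) * X)^(j-1) * (1 + C (1:F) * X)^(n-j)).coeff (p-1))
      = (-a) * (-a⁻¹)^n * ∑ m ∈ range n, (((i-1).choose m : F) * (-a)^m *
          ((1 + C (-a^2) * X)^(n-1-m) * (1 + C (1:F) * X)^m).coeff (p-1)) := by
    rw [← Finset.Ico_add_one_right_eq_Icc, Finset.sum_Ico_eq_sum_range, Nat.add_sub_cancel,
      ← Finset.sum_range_reflect, Finset.mul_sum]
    refine sum_congr rfl fun t ht => ?_
    rw [mem_range] at ht
    have e1 : 1 + (n - 1 - t) = n - t := by omega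
    have e2 : n - (n - t) = t := by omega
    have e3 : n - t - 1 = n - 1 - t := by omega
    rw [e1, e2, e3, pow_sub₀ (-a⁻¹) (by simp [ha0]) ht.le, ← inv_pow, inv_neg, inv_inv]
    ring
  rw [step1]
  -- turn scalar sum into coefficient of polynomial sum
  have step2 : ∑ m ∈ range n, (((i-1).choose m : F) * (-a)^m *
        ((1 + C (-a^2) * X)^(n-1-m) * (1 + C (1:F) * X)^m).coeff (p-1))
      = (∑ m ∈ range n, C (((i-1).choose m : F) * (-a)^m) *
          ((1 + C (-a^2) * X)^(n-1-m) * (1 + C (1:F) * X)^m)).coeff (p-1) := by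
    rw [finset_sum_coeff]
    exact sum_congr rfl fun m _ => by rw [coeff_C_mul]
  rw [step2, outer_poly a ha n i hi1 hin, coeff_C_mul, coeff_GH a n i p hp1]
  -- final scalar bookkeeping
  have scal : (-a)*(-a⁻¹)^n*((-a⁻¹)^(i-1)*(-a^2)^(p-1))
      = (-1:F)^(n+p) * a^(2*(p:ℤ) - n - 1) * ((-a⁻¹)^i * (-a)) := by
    obtain ⟨i, rfl⟩ : ∃ i', i = i'+1 := ⟨i-1, by omega⟩
    obtain ⟨p, rfl⟩ : ∃ p', p = p'+1 := ⟨p-1, by omega⟩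
    simp only [Nat.add_sub_cancel]
    have hz : (2*((p+1:ℕ):ℤ) - n - 1) = ((2*p+1:ℕ):ℤ) - ((n:ℕ):ℤ) := by push_cast; ring
    rw [hz, zpow_sub₀ ha0, zpow_natCast, zpow_natCast, div_eq_mul_inv,
      neg_pow a⁻¹ n, neg_pow a⁻¹ i, neg_pow (a^2) p, neg_pow a⁻¹ (i+1),
      inv_pow a n, inv_pow a i, inv_pow a (i+1)]
    field_simp
    ring
  linear_combination
    ((1 + C (-a^2) * X)^(i-1) * (1 + C (1:F) * X)^(n-i) : F[X]).coeff (p-1) * scal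
end

section
/- For integers i, k, n with 1 ≤ i, k ≤ n, and t an indeterminate over ℚ, the following Laurent-polynomial identity holds: Σ_{j=1}^{n} [Σ_{r} (-1)^{i-r} C(i-1,r-1) C(n-i,j-r) t^{2r-i-1}] (-1)^{j} t^{n-j} [Σ_{s} (-1)^{j-s} C(j-1,s-1) C(n-j,k-s) t^{2s-j-1}] (-1)^{k} t^{n-k} = (1+t^2)^{n-1} δ_{i,k}. -/
open Polynomial LaurentPolynomial Finset

namespace Stmt16Aux

noncomputable section

abbrev R : Type := LaurentPolynomial ℚ

/-- coefficient of a power of a linear polynomial -/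
lemma coeff_lin_pow (u v : R) (m a : ℕ) :
    ((Polynomial.C u * Polynomial.X + Polynomial.C v) ^ m).coeff a
      = u ^ a * v ^ (m - a) * (m.choose a : R) := by
  rw [add_pow, finset_sum_coeff]
  have h : ∀ k, (Polynomial.C u * Polynomial.X) ^ k * Polynomial.C v ^ (m - k) *
        ((m.choose k : ℕ) : Polynomial R)
      = Polynomial.C (u ^ k * v ^ (m - k) * ((m.choose k : ℕ) : R)) * Polynomial.X ^ k := by
    intro k
    rw [← Polynomial.C_eq_natCast, mul_pow, ← Polynomial.C_pow, ← Polynomial.C_pow,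
      Polynomial.C_mul, Polynomial.C_mul]
    ring
  simp only [h, Polynomial.coeff_C_mul, Polynomial.coeff_X_pow, mul_ite, mul_one, mul_zero]
  rw [Finset.sum_ite_eq (Finset.range (m + 1)) a]
  split_ifs with ha
  · rfl
  · rw [Nat.choose_eq_zero_of_lt (by simpa using ha), Nat.cast_zero, mul_zero]

/-- the polynomial `P_i(x) = (tx-1)^{i-1} (x+t)^{n-i}` -/
def Pm (n i : ℕ) : Polynomial R :=
  (Polynomial.C (T 1) * Polynomial.X + Polynomial.C (-1)) ^ (i - 1) *
    (Polynomial.C 1 * Polynomial.X + Polynomial.C (T 1)) ^ (n - i)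

lemma coeff_Pm (n i j : ℕ) (hi1 : 1 ≤ i) (hin : i ≤ n) (hj1 : 1 ≤ j) (hjn : j ≤ n) :
    (Pm n i).coeff (j - 1) =
      (∑ r ∈ Finset.Icc 1 (min i j),
          (-1 : LaurentPolynomial ℚ) ^ (i - r) * (Nat.choose (i - 1) (r - 1) : LaurentPolynomial ℚ) *
            (Nat.choose (n - i) (j - r) : LaurentPolynomial ℚ) * T (2 * (r : ℤ) - i - 1)) *
        T ((n : ℤ) - j) := by
  rw [Finset.sum_mul]
  rw [Finset.sum_subset (Finset.Icc_subset_Icc_right (min_le_right i j) :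
        Finset.Icc 1 (min i j) ⊆ Finset.Icc 1 j)]
  · rw [Pm, Polynomial.coeff_mul, Finset.Nat.sum_antidiagonal_eq_sum_range_succ_mk,
      show (j - 1).succ = j from by omega]
    refine Finset.sum_nbij' (fun a => a + 1) (fun r => r - 1) ?_ ?_ ?_ ?_ ?_
    · intro a ha; simp only [Finset.mem_range] at ha; simp only [Finset.mem_Icc]; omega
    · intro r hr; simp only [Finset.mem_Icc] at hr; simp only [Finset.mem_range]; omega
    · intro a _; show a + 1 - 1 = a; omega
    · intro r hr; simp only [Finset.mem_Icc] at hr; show r - 1 + 1 = r; omega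
    · intro a ha
      simp only [Finset.mem_range] at ha
      rw [coeff_lin_pow, coeff_lin_pow, one_pow, Nat.add_sub_cancel,
        show j - (a + 1) = j - 1 - a from by omega,
        show i - (a + 1) = i - 1 - a from by omega]
      rcases le_or_gt i a with hia | hia
      · rw [Nat.choose_eq_zero_of_lt (show i - 1 < a by omega), Nat.cast_zero]
        ring
      · rcases lt_or_ge (n - i) (j - 1 - a) with hni | hni
        · rw [Nat.choose_eq_zero_of_lt hni, Nat.cast_zero]; ring
        · have ht : ∀ c : ℕ, (T 1 : LaurentPolynomial ℚ) ^ c = T (c : ℤ) := fun c => by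
            rw [T_pow, mul_one]
          rw [ht, ht]
          have hTT : (T (a : ℤ) * T ((n - i - (j - 1 - a) : ℕ) : ℤ) : LaurentPolynomial ℚ)
              = T (2 * ((a + 1 : ℕ) : ℤ) - i - 1) * T ((n : ℤ) - j) := by
            rw [← T_add, ← T_add]; congr 1; omega
          linear_combination
            ((-1 : LaurentPolynomial ℚ) ^ (i - 1 - a) * ((i - 1).choose a : LaurentPolynomial ℚ) *
              ((n - i).choose (j - 1 - a) : LaurentPolynomial ℚ)) * hTT
  · intro r hr hr'
    simp only [Finset.mem_Icc] at hr
    simp only [Finset.mem_Icc] at hr'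
    rw [Nat.choose_eq_zero_of_lt (show i - 1 < r - 1 by omega), Nat.cast_zero]
    ring


set_option maxHeartbeats 2000000 in
set_option synthInstance.maxHeartbeats 1000000 in
lemma key (n i : ℕ) (hi1 : 1 ≤ i) (hin : i ≤ n) :
    ∑ j ∈ Finset.Icc 1 n,
        Polynomial.C ((Pm n i).coeff (j - 1) * (-1) ^ j) *
          ((Polynomial.C (T 1) * Polynomial.X + Polynomial.C (-1)) ^ (j - 1) *
            (Polynomial.C 1 * Polynomial.X + Polynomial.C (T 1)) ^ (n - j))
      = Polynomial.C ((-1) ^ i * (1 + (T 1 : R) ^ 2) ^ (n - 1)) * Polynomial.X ^ (i - 1) := by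
  have hinj := IsFractionRing.injective (Polynomial R) (FractionRing (Polynomial R))
  apply hinj
  set ι := algebraMap (Polynomial R) (FractionRing (Polynomial R)) with hι
  have hdne : (Polynomial.C 1 * Polynomial.X + Polynomial.C (T 1) : Polynomial R) ≠ 0 := by
    rw [Polynomial.C_1, one_mul]; exact (Polynomial.monic_X_add_C (T 1)).ne_zero
  have hd0 : ι (Polynomial.C 1 * Polynomial.X + Polynomial.C (T 1)) ≠ 0 :=
    fun h => hdne (hinj (by rw [h, map_zero]))
  set d := ι (Polynomial.C 1 * Polynomial.X + Polynomial.C (T 1)) with hd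
  set u := ι (Polynomial.C 1 - Polynomial.C (T 1) * Polynomial.X) / d with hu
  have hud : u * d = ι (Polynomial.C 1 - Polynomial.C (T 1) * Polynomial.X) :=
    div_mul_cancel₀ _ hd0
  have h1 : (ι (Polynomial.C (T 1)) * u - 1) * d = ι (-(Polynomial.C (1 + (T 1 : R) ^ 2) * Polynomial.X)) := by
    have hp : (Polynomial.C (T 1)) * (Polynomial.C 1 - Polynomial.C (T 1) * Polynomial.X)
        - (Polynomial.C 1 * Polynomial.X + Polynomial.C (T 1))
        = -(Polynomial.C (1 + (T 1 : R) ^ 2) * Polynomial.X) := by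
      simp only [map_add, map_one, map_pow, Polynomial.C_1]
      ring
    rw [sub_mul, one_mul, mul_assoc, hud, ← map_mul, hd, ← map_sub, hp]
  have h2 : (u + ι (Polynomial.C (T 1))) * d = ι (Polynomial.C (1 + (T 1 : R) ^ 2)) := by
    have hp : (Polynomial.C 1 - Polynomial.C (T 1) * Polynomial.X)
        + (Polynomial.C (T 1)) * (Polynomial.C 1 * Polynomial.X + Polynomial.C (T 1))
        = Polynomial.C (1 + (T 1 : R) ^ 2) := by
      simp only [map_add, map_one, map_pow, Polynomial.C_1]
      ring
    rw [add_mul, hud, hd, ← map_mul, ← map_add, hp]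
  have hdeg : (Pm n i).natDegree < n := by
    have h1d : (Polynomial.C (T 1) * Polynomial.X + Polynomial.C (-1) : Polynomial R).natDegree ≤ 1 := by
      compute_degree
    have h2d : (Polynomial.C 1 * Polynomial.X + Polynomial.C (T 1) : Polynomial R).natDegree ≤ 1 := by
      compute_degree
    have hle : (Pm n i).natDegree ≤ (i - 1) * 1 + (n - i) * 1 := by
      rw [Pm]
      exact Polynomial.natDegree_mul_le.trans (add_le_add
        (Polynomial.natDegree_pow_le.trans (Nat.mul_le_mul (le_refl _) h1d))
        (Polynomial.natDegree_pow_le.trans (Nat.mul_le_mul (le_refl _) h2d)))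
    omega
  have heval := Polynomial.eval₂_eq_sum_range' (ι.comp Polynomial.C) hdeg u
  have heval2 : Polynomial.eval₂ (ι.comp Polynomial.C) u (Pm n i)
      = (ι (Polynomial.C (T 1)) * u - 1) ^ (i - 1) * (u + ι (Polynomial.C (T 1))) ^ (n - i) := by
    rw [Pm]
    simp only [Polynomial.eval₂_mul, Polynomial.eval₂_pow, Polynomial.eval₂_add,
      Polynomial.eval₂_X, Polynomial.eval₂_C, Polynomial.eval₂_one, Polynomial.eval₂_neg,
      RingHom.coe_comp, Function.comp_apply,
      map_one, map_neg, Polynomial.C_1, Polynomial.C_neg]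
    ring
  rw [map_sum]
  have hterm : ∀ j ∈ Finset.Icc 1 n,
      ι (Polynomial.C ((Pm n i).coeff (j - 1) * (-1) ^ j) *
          ((Polynomial.C (T 1) * Polynomial.X + Polynomial.C (-1)) ^ (j - 1) *
            (Polynomial.C 1 * Polynomial.X + Polynomial.C (T 1)) ^ (n - j)))
        = -((ι.comp Polynomial.C) ((Pm n i).coeff (j - 1)) * u ^ (j - 1)) * d ^ (n - 1) := by
    intro j hj
    simp only [Finset.mem_Icc] at hj
    have hAeq : (Polynomial.C (T 1) * Polynomial.X + Polynomial.C (-1) : Polynomial R)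
        = -(Polynomial.C 1 - Polynomial.C (T 1) * Polynomial.X) := by
      simp only [Polynomial.C_neg, Polynomial.C_1]; ring
    have hc : ι (Polynomial.C ((Pm n i).coeff (j - 1) * (-1) ^ j))
        = ι (Polynomial.C ((Pm n i).coeff (j - 1))) * (-1) ^ j := by
      rw [Polynomial.C_mul, map_mul]
      congr 1
      simp [map_pow, map_neg, map_one]
    have hsgn : ((-1 : FractionRing (Polynomial R))) ^ j * (-1) ^ (j - 1) = -1 := by
      rw [← pow_add]
      exact Odd.neg_one_pow ⟨j - 1, by omega⟩
    have hdd : d ^ (j - 1) * d ^ (n - j) = d ^ (n - 1) := by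
      rw [← pow_add]; congr 1; omega
    rw [map_mul, hc, map_mul, map_pow, map_pow, hAeq, map_neg, ← hud, ← hd]
    have hneg2 : (-(u * d)) ^ (j - 1) = (-1) ^ (j - 1) * (u ^ (j - 1) * d ^ (j - 1)) := by
      rw [neg_pow, mul_pow]
    rw [hneg2]
    simp only [RingHom.coe_comp, Function.comp_apply]
    linear_combination
      (ι (Polynomial.C ((Pm n i).coeff (j - 1))) * u ^ (j - 1) * d ^ (j - 1) * d ^ (n - j)) * hsgn
      + (-(ι (Polynomial.C ((Pm n i).coeff (j - 1))) * u ^ (j - 1))) * hdd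
  rw [Finset.sum_congr rfl hterm, ← Finset.sum_mul, Finset.sum_neg_distrib]
  have hre : ∑ j ∈ Finset.Icc 1 n, (ι.comp Polynomial.C) ((Pm n i).coeff (j - 1)) * u ^ (j - 1)
      = ∑ m ∈ Finset.range n, (ι.comp Polynomial.C) ((Pm n i).coeff m) * u ^ m := by
    refine Finset.sum_nbij' (fun j => j - 1) (fun m => m + 1) ?_ ?_ ?_ ?_ ?_
    · intro j hj; simp only [Finset.mem_Icc] at hj; simp only [Finset.mem_range]; omega
    · intro m hm; simp only [Finset.mem_range] at hm; simp only [Finset.mem_Icc]; omega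
    · intro j hj; simp only [Finset.mem_Icc] at hj; show j - 1 + 1 = j; omega
    · intro m _; show m + 1 - 1 = m; omega
    · intro j _; rfl
  rw [hre, ← heval, heval2]
  have hsplit : (d : FractionRing (Polynomial R)) ^ (n - 1) = d ^ (i - 1) * d ^ (n - i) := by
    rw [← pow_add]; congr 1; omega
  rw [hsplit]
  calc -((ι (Polynomial.C (T 1)) * u - 1) ^ (i - 1) * (u + ι (Polynomial.C (T 1))) ^ (n - i)) *
        (d ^ (i - 1) * d ^ (n - i))
      = -(((ι (Polynomial.C (T 1)) * u - 1) * d) ^ (i - 1) *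
          ((u + ι (Polynomial.C (T 1))) * d) ^ (n - i)) := by
        rw [mul_pow, mul_pow]; ring
    _ = -(ι (-(Polynomial.C (1 + (T 1 : R) ^ 2) * Polynomial.X)) ^ (i - 1) *
          ι (Polynomial.C (1 + (T 1 : R) ^ 2)) ^ (n - i)) := by rw [h1, h2]
    _ = ι (-((-(Polynomial.C (1 + (T 1 : R) ^ 2) * Polynomial.X)) ^ (i - 1) *
          (Polynomial.C (1 + (T 1 : R) ^ 2)) ^ (n - i))) := by
        simp only [map_neg, map_mul, map_pow]
    _ = ι (Polynomial.C ((-1) ^ i * (1 + (T 1 : R) ^ 2) ^ (n - 1)) * Polynomial.X ^ (i - 1)) := by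
        congr 1
        have hnegpow : ((-1 : Polynomial R)) ^ i = -(-1) ^ (i - 1) := by
          conv_lhs => rw [show i = (i - 1) + 1 from by omega]
          rw [pow_succ]; ring
        have hw : (Polynomial.C ((-1 : R) ^ i * (1 + (T 1 : R) ^ 2) ^ (n - 1)) : Polynomial R)
            = (-1) ^ i * (Polynomial.C (1 + (T 1 : R) ^ 2)) ^ (n - 1) := by
          rw [Polynomial.C_mul, map_pow, map_pow, map_neg, map_one]
        have hnp : (-(Polynomial.C (1 + (T 1 : R) ^ 2) * Polynomial.X)) ^ (i - 1)
            = (-1) ^ (i - 1) *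
              (Polynomial.C (1 + (T 1 : R) ^ 2) ^ (i - 1) * Polynomial.X ^ (i - 1)) := by
          have h := neg_pow (Polynomial.C (1 + (T 1 : R) ^ 2) * Polynomial.X) (i - 1)
          rw [h, mul_pow]
        rw [hnp, hw, show (n - 1) = (i - 1) + (n - i) from by omega, pow_add, hnegpow]
        ring

end

end Stmt16Aux

open LaurentPolynomial in
/-- The identity `W² = (1+t²)^{n-1} Iₙ`, entrywise, as an identity of Laurent
polynomials in `t` over `ℚ` (so it does not require `t` to be the golden ratio);
`T e` denotes `t^e`. -/
theorem stmt16 (n i k : ℕ) (hi1 : 1 ≤ i) (hin : i ≤ n) (hk1 : 1 ≤ k) (hkn : k ≤ n) :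
    ∑ j ∈ Finset.Icc 1 n,
        (∑ r ∈ Finset.Icc 1 (min i j),
            (-1 : LaurentPolynomial ℚ) ^ (i - r) * (Nat.choose (i - 1) (r - 1) : LaurentPolynomial ℚ) *
              (Nat.choose (n - i) (j - r) : LaurentPolynomial ℚ) * T (2 * (r : ℤ) - i - 1)) *
          (-1 : LaurentPolynomial ℚ) ^ j * T ((n : ℤ) - j) *
          (∑ s ∈ Finset.Icc 1 (min j k),
            (-1 : LaurentPolynomial ℚ) ^ (j - s) * (Nat.choose (j - 1) (s - 1) : LaurentPolynomial ℚ) *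
              (Nat.choose (n - j) (k - s) : LaurentPolynomial ℚ) * T (2 * (s : ℤ) - j - 1)) *
          (-1 : LaurentPolynomial ℚ) ^ k * T ((n : ℤ) - k) =
      (1 + T 2) ^ (n - 1) * if i = k then 1 else 0 := by
  classical
  have hterm : ∀ j ∈ Finset.Icc 1 n,
      (∑ r ∈ Finset.Icc 1 (min i j),
          (-1 : LaurentPolynomial ℚ) ^ (i - r) * (Nat.choose (i - 1) (r - 1) : LaurentPolynomial ℚ) *
            (Nat.choose (n - i) (j - r) : LaurentPolynomial ℚ) * T (2 * (r : ℤ) - i - 1)) *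
        (-1 : LaurentPolynomial ℚ) ^ j * T ((n : ℤ) - j) *
        (∑ s ∈ Finset.Icc 1 (min j k),
          (-1 : LaurentPolynomial ℚ) ^ (j - s) * (Nat.choose (j - 1) (s - 1) : LaurentPolynomial ℚ) *
            (Nat.choose (n - j) (k - s) : LaurentPolynomial ℚ) * T (2 * (s : ℤ) - j - 1)) *
        (-1 : LaurentPolynomial ℚ) ^ k * T ((n : ℤ) - k)
      = (Stmt16Aux.Pm n i).coeff (j - 1) * (-1) ^ j *
          ((Stmt16Aux.Pm n j).coeff (k - 1) * (-1) ^ k) := by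
    intro j hj
    simp only [Finset.mem_Icc] at hj
    rw [Stmt16Aux.coeff_Pm n i j hi1 hin hj.1 hj.2,
      Stmt16Aux.coeff_Pm n j k hj.1 hj.2 hk1 hkn]
    ring
  rw [Finset.sum_congr rfl hterm]
  have h2 : ∑ j ∈ Finset.Icc 1 n, (Stmt16Aux.Pm n i).coeff (j - 1) * (-1) ^ j *
        ((Stmt16Aux.Pm n j).coeff (k - 1) * (-1) ^ k)
      = (∑ j ∈ Finset.Icc 1 n, Polynomial.C ((Stmt16Aux.Pm n i).coeff (j - 1) * (-1) ^ j) *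
          ((Polynomial.C (T 1) * Polynomial.X + Polynomial.C (-1)) ^ (j - 1) *
            (Polynomial.C 1 * Polynomial.X + Polynomial.C (T 1)) ^ (n - j))).coeff (k - 1) *
          (-1) ^ k := by
    rw [Polynomial.finset_sum_coeff, Finset.sum_mul]
    refine Finset.sum_congr rfl fun j hj => ?_
    rw [Polynomial.coeff_C_mul,
      show ((Polynomial.C (T 1) * Polynomial.X + Polynomial.C (-1)) ^ (j - 1) *
        (Polynomial.C 1 * Polynomial.X + Polynomial.C (T 1)) ^ (n - j)) = Stmt16Aux.Pm n j from rfl]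
    ring
  rw [h2, Stmt16Aux.key n i hi1 hin, Polynomial.coeff_C_mul, Polynomial.coeff_X_pow]
  have hT2 : (1 + T 2 : LaurentPolynomial ℚ) = 1 + (T 1 : LaurentPolynomial ℚ) ^ 2 := by
    rw [T_pow]; norm_num
  rw [hT2]
  by_cases hik : i = k
  · subst hik
    rw [if_pos rfl, if_pos rfl]
    have hs : ((-1 : LaurentPolynomial ℚ)) ^ i * (-1 : LaurentPolynomial ℚ) ^ i = 1 := by
      rw [← mul_pow]; norm_num
    linear_combination ((1 + (T 1 : LaurentPolynomial ℚ) ^ 2) ^ (n - 1)) * hs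
  · rw [if_neg (show ¬ (k - 1 = i - 1) by omega), if_neg hik]
    ring
end
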